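/- arXiv:1803.00966 — 7 statements merged into one kernel-verified Lean document; each statement's English description precedes it below -/
import Mathlib

section
/- Let f be a piecewise C^1 function on [-L, L] (with respect to the partition -L = z_0 < ... < z_N = L) satisfying f(x) ≥ f_min > 0 for all x ∈ [-L, L]. Then ∏_{ℓ=1}^{N-1} max{ f^+(z_ℓ)/f^-(z_ℓ), 1 } ≤ exp( Var(f)/f_min ), and likewise ∏_{ℓ=1}^{N-1} max{ f^-(z_ℓ)/f^+(z_ℓ), 1 } ≤ exp( Var(f)/f_min ). -/
open MeasureTheory

/-- A real-valued piecewise `C¹` function with respect to the partition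
`z 0 < z 1 < ... < z N` of `[z 0, z N]`: for each `j = 1, ..., N` the function agrees on
the open subinterval `(z (j-1), z j)` with a `C¹` function `piece j` (defined on the
closed subinterval, i.e. extended to `ℝ`) whose derivative is `dpiece j`,
continuous on the closed subinterval. -/
structure PW1 (N : ℕ) (z : ℕ → ℝ) where
  f : ℝ → ℝ
  piece : ℕ → ℝ → ℝ
  dpiece : ℕ → ℝ → ℝ
  smooth : ∀ j, 1 ≤ j → j ≤ N → ∀ x ∈ Set.Icc (z (j-1)) (z j),
    HasDerivAt (piece j) (dpiece j x) x
  contd : ∀ j, 1 ≤ j → j ≤ N → ContinuousOn (dpiece j) (Set.Icc (z (j-1)) (z j))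
  agree : ∀ j, 1 ≤ j → j ≤ N → ∀ x ∈ Set.Ioo (z (j-1)) (z j), f x = piece j x

namespace PW1

variable {N : ℕ} {z : ℕ → ℝ}

/-- the left (one-sided) limit `g⁻(z j)`, for `1 ≤ j ≤ N` -/
def limL (g : PW1 N z) (j : ℕ) : ℝ := g.piece j (z j)

/-- the right (one-sided) limit `g⁺(z j)`, for `0 ≤ j ≤ N-1` -/
def limR (g : PW1 N z) (j : ℕ) : ℝ := g.piece (j+1) (z j)

/-- the jump `[g]_{z j} = g⁻(z j) - g⁺(z j)` at an interior break point -/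
def jump (g : PW1 N z) (j : ℕ) : ℝ := g.limL j - g.limR j

/-- the variation `Var(g) = ∑_{j=1}^{N-1} |[g]_{z_j}| + ∫_{-L}^{L} |∂_pw g|` -/
noncomputable def var (g : PW1 N z) : ℝ :=
  (∑ j ∈ Finset.Icc 1 (N-1), |g.jump j|)
    + ∑ j ∈ Finset.Icc 1 N, ∫ s in (z (j-1))..(z j), |g.dpiece j s|

/-- the variation `Var(g²)` of the square `g²` (a piecewise `C¹` function with pieces
`(piece j)²` and regular derivative `2 ⬝ piece j ⬝ dpiece j`) -/
noncomputable def varSq (g : PW1 N z) : ℝ :=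
  (∑ j ∈ Finset.Icc 1 (N-1), |(g.limL j)^2 - (g.limR j)^2|)
    + ∑ j ∈ Finset.Icc 1 N, ∫ s in (z (j-1))..(z j), |2 * g.piece j s * g.dpiece j s|

/-- the (regular part of the) derivative of `g` is one-signed on each subinterval:
either everywhere positive or everywhere `≤ 0` -/
def OneSigned (g : PW1 N z) : Prop :=
  ∀ j, 1 ≤ j → j ≤ N →
    (∀ x ∈ Set.Ioo (z (j-1)) (z j), 0 < g.dpiece j x) ∨
      (∀ x ∈ Set.Ioo (z (j-1)) (z j), g.dpiece j x ≤ 0)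

/-- `tg` is the modified coefficient `g̃` associated with `g` : on each subinterval `τ_j`
it equals `g` if `∂_pw g > 0` on `τ_j`, and the constant `g⁺(z (j-1))` if `∂_pw g ≤ 0`
on `τ_j`. -/
def IsTilde (g tg : PW1 N z) : Prop :=
  ∀ j, 1 ≤ j → j ≤ N →
    ((∀ x ∈ Set.Ioo (z (j-1)) (z j), 0 < g.dpiece j x) ∧
        (∀ x ∈ Set.Icc (z (j-1)) (z j), tg.piece j x = g.piece j x) ∧
        (∀ x ∈ Set.Icc (z (j-1)) (z j), tg.dpiece j x = g.dpiece j x)) ∨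
    ((∀ x ∈ Set.Ioo (z (j-1)) (z j), g.dpiece j x ≤ 0) ∧
        (∀ x ∈ Set.Icc (z (j-1)) (z j), tg.piece j x = g.piece j (z (j-1))) ∧
        (∀ x ∈ Set.Icc (z (j-1)) (z j), tg.dpiece j x = 0))

/-- `α_j = max{ ã⁻(z_j)/ã⁺(z_j), 1 }` -/
noncomputable def alphaJ (ta : PW1 N z) (j : ℕ) : ℝ := max (ta.limL j / ta.limR j) 1

/-- `σ_j = max{ (c̃²)⁻(z_j)/(c̃²)⁺(z_j), 1 }` -/
noncomputable def sigmaJ (tc : PW1 N z) (j : ℕ) : ℝ := max ((tc.limL j)^2 / (tc.limR j)^2) 1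

/-- `γ_j = max{ a⁺(z_j)/a⁻(z_j), (c²)⁺(z_j)/(c²)⁻(z_j), 1 }` -/
noncomputable def gammaJ (a c : PW1 N z) (j : ℕ) : ℝ :=
  max (max (a.limR j / a.limL j) ((c.limR j)^2 / (c.limL j)^2)) 1

/-- `∫_{τ_j} 1/(ã c̃²)` -/
noncomputable def Ival (ta tc : PW1 N z) (j : ℕ) : ℝ :=
  ∫ s in (z (j-1))..(z j), 1 / (ta.piece j s * (tc.piece j s)^2)

/-- the sequence `A_1 = 0`, `A_{j+1} = α_j σ_j γ_j ( ∫_{τ_j} 1/(ã c̃²) + A_j )` -/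
noncomputable def Aseq (ta tc a c : PW1 N z) : ℕ → ℝ
  | 0 => 0
  | 1 => 0
  | (j+2) => alphaJ ta (j+1) * sigmaJ tc (j+1) * gammaJ a c (j+1)
      * (Ival ta tc (j+1) + Aseq ta tc a c (j+1))

/-- the function `q` on `τ_j` :
`q(x) = ã(x) c̃²(x) ( ∫_{z_{j-1}}^{x} 1/(ã c̃²) + A_j )` -/
noncomputable def qpiece (ta tc a c : PW1 N z) (j : ℕ) (x : ℝ) : ℝ :=
  ta.piece j x * (tc.piece j x)^2 *
    ((∫ s in (z (j-1))..x, 1 / (ta.piece j s * (tc.piece j s)^2)) + Aseq ta tc a c j)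

/-- the one-sided limit of `g` at the boundary points `z 0` and `z N` -/
noncomputable def bdry (g : PW1 N z) (x : ℝ) : ℝ :=
  if x = z 0 then g.piece 1 (z 0) else g.piece N (z N)

end PW1

lemma ratio_le_exp {a b fmin : ℝ} (hfmin : 0 < fmin) (ha : fmin ≤ a) (hb : fmin ≤ b) :
    max (a / b) 1 ≤ Real.exp (|a - b| / fmin) := by
  have hb0 : 0 < b := lt_of_lt_of_le hfmin hb
  have habs : 0 ≤ |a - b| / fmin := div_nonneg (abs_nonneg _) hfmin.le
  refine max_le ?_ (Real.one_le_exp habs)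
  have h1 : a / b ≤ 1 + |a - b| / fmin := by
    rw [div_le_iff₀ hb0]
    have h2 : a - b ≤ |a - b| := le_abs_self _
    have h3 : |a - b| / fmin * fmin = |a - b| := div_mul_cancel₀ _ hfmin.ne'
    nlinarith [abs_nonneg (a - b), mul_le_mul_of_nonneg_left hb (div_nonneg (abs_nonneg (a-b)) hfmin.le)]
  calc a / b ≤ 1 + |a - b| / fmin := h1
    _ = |a - b| / fmin + 1 := by ring
    _ ≤ Real.exp (|a - b| / fmin) := Real.add_one_le_exp _
/-- Lemma A.1 of the paper: if `f` is piecewise `C¹` on `[-L,L]` with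
`f ≥ f_min > 0`, then `∏_{ℓ=1}^{N-1} max{ f⁺(z_ℓ)/f⁻(z_ℓ), 1 } ≤ exp(Var(f)/f_min)`, and
likewise with the roles of `f⁺` and `f⁻` interchanged. -/
theorem stmt0 (L : ℝ) (hL : 0 < L) (N : ℕ) (hN : 1 ≤ N) (z : ℕ → ℝ)
    (hz0 : z 0 = -L) (hzN : z N = L) (hzmono : ∀ j < N, z j < z (j+1))
    (f : PW1 N z) (fmin : ℝ) (hfmin : 0 < fmin)
    (hlow : ∀ j, 1 ≤ j → j ≤ N → ∀ x ∈ Set.Icc (z (j-1)) (z j), fmin ≤ f.piece j x) :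
    (∏ j ∈ Finset.Icc 1 (N-1), max (f.limR j / f.limL j) 1) ≤ Real.exp (f.var / fmin) ∧
    (∏ j ∈ Finset.Icc 1 (N-1), max (f.limL j / f.limR j) 1) ≤ Real.exp (f.var / fmin) := by
  -- basic facts about the partition
  have hle : ∀ j, 1 ≤ j → j ≤ N → z (j - 1) ≤ z j := by
    intro j h1 h2
    have := hzmono (j - 1) (by omega)
    have hj : j - 1 + 1 = j := by omega
    rw [hj] at this
    exact this.le
  -- the one-sided limits are bounded below by fmin
  have hL' : ∀ j, 1 ≤ j → j ≤ N - 1 → fmin ≤ f.limL j := by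
    intro j h1 h2
    exact hlow j h1 (by omega) (z j) ⟨hle j h1 (by omega), le_rfl⟩
  have hR' : ∀ j, 1 ≤ j → j ≤ N - 1 → fmin ≤ f.limR j := by
    intro j h1 h2
    have := hlow (j + 1) (by omega) (by omega) (z j)
    simp only [Nat.add_sub_cancel] at this
    exact this ⟨le_rfl, hle (j + 1) (by omega) (by omega)⟩
  -- sum of jumps is bounded by the variation
  have hint : 0 ≤ ∑ j ∈ Finset.Icc 1 N, ∫ s in (z (j-1))..(z j), |f.dpiece j s| := by
    refine Finset.sum_nonneg fun j hj => ?_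
    simp only [Finset.mem_Icc] at hj
    exact intervalIntegral.integral_nonneg (hle j hj.1 hj.2) (fun u _ => abs_nonneg _)
  have hjump : ∑ j ∈ Finset.Icc 1 (N-1), |f.jump j| ≤ f.var := by
    unfold PW1.var; linarith
  -- common estimate
  have key : ∀ (g : ℕ → ℝ), (∀ j, 1 ≤ j → j ≤ N - 1 → max (g j) 1 ≤
        Real.exp (|f.jump j| / fmin)) →
      (∏ j ∈ Finset.Icc 1 (N-1), max (g j) 1) ≤ Real.exp (f.var / fmin) := by
    intro g hg
    calc (∏ j ∈ Finset.Icc 1 (N-1), max (g j) 1)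
        ≤ ∏ j ∈ Finset.Icc 1 (N-1), Real.exp (|f.jump j| / fmin) := by
          refine Finset.prod_le_prod (fun j _ => ?_) (fun j hj => ?_)
          · exact le_trans zero_le_one (le_max_right _ _)
          · simp only [Finset.mem_Icc] at hj; exact hg j hj.1 hj.2
      _ = Real.exp (∑ j ∈ Finset.Icc 1 (N-1), |f.jump j| / fmin) := by
          rw [Real.exp_sum]
      _ ≤ Real.exp (f.var / fmin) := by
          apply Real.exp_le_exp.mpr
          rw [← Finset.sum_div]
          gcongr
  constructor
  · refine key _ fun j h1 h2 => ?_
    have := ratio_le_exp hfmin (hR' j h1 h2) (hL' j h1 h2)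
    have habs : |f.limR j - f.limL j| = |f.jump j| := by
      rw [PW1.jump, abs_sub_comm]
    rwa [habs] at this
  · refine key _ fun j h1 h2 => ?_
    have := ratio_le_exp hfmin (hL' j h1 h2) (hR' j h1 h2)
    rwa [show |f.limL j - f.limR j| = |f.jump j| from rfl] at this
end

section
/- Let a be a piecewise C^1 function on [-L, L] whose derivative is one-signed (either everywhere positive or everywhere ≤ 0) on each subinterval τ_j, and let ã be the associated modified coefficient. Then Var(ã) ≤ Var(a). -/
open MeasureTheory

/-- Proposition `prop:var`: `Var(ã) ≤ Var(a)` for the modified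
coefficient `ã` associated with a piecewise `C¹` coefficient `a` whose derivative is
one-signed on each subinterval. -/
theorem stmt1 (L : ℝ) (hL : 0 < L) (N : ℕ) (hN : 1 ≤ N) (z : ℕ → ℝ)
    (hz0 : z 0 = -L) (hzN : z N = L) (hzmono : ∀ j < N, z j < z (j+1))
    (a ta : PW1 N z) (hsign : a.OneSigned) (htilde : a.IsTilde ta) :
    ta.var ≤ a.var := by
  have hmono : ∀ j, 1 ≤ j → j ≤ N → z (j-1) ≤ z j := by
    intro j h1 h2
    have h := hzmono (j-1) (by omega)
    have hj : j - 1 + 1 = j := by omega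
    rw [hj] at h
    exact h.le
  -- integral comparison on each subinterval
  have hInt : ∀ j, 1 ≤ j → j ≤ N →
      (∫ s in (z (j-1))..(z j), |ta.dpiece j s|) ≤
        ∫ s in (z (j-1))..(z j), |a.dpiece j s| := by
    intro j h1 h2
    rcases htilde j h1 h2 with ⟨_, _, hd⟩ | ⟨_, _, hd⟩
    · have heq : (∫ s in (z (j-1))..(z j), |ta.dpiece j s|) =
          ∫ s in (z (j-1))..(z j), |a.dpiece j s| := by
        apply intervalIntegral.integral_congr
        intro x hx
        rw [Set.uIcc_of_le (hmono j h1 h2)] at hx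
        simp [hd x hx]
      linarith
    · have h0 : (∫ s in (z (j-1))..(z j), |ta.dpiece j s|) = 0 := by
        have heq : (∫ s in (z (j-1))..(z j), |ta.dpiece j s|) =
            ∫ s in (z (j-1))..(z j), (0 : ℝ) := by
          apply intervalIntegral.integral_congr
          intro x hx
          rw [Set.uIcc_of_le (hmono j h1 h2)] at hx
          simp [hd x hx]
        simp [heq]
      rw [h0]
      exact intervalIntegral.integral_nonneg (hmono j h1 h2) (fun x _ => abs_nonneg _)
  -- fundamental theorem of calculus estimate
  have hFTC : ∀ j, 1 ≤ j → j ≤ N →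
      |a.piece j (z j) - a.piece j (z (j-1))| ≤
        ∫ s in (z (j-1))..(z j), |a.dpiece j s| := by
    intro j h1 h2
    have hle := hmono j h1 h2
    have hint : IntervalIntegrable (a.dpiece j) MeasureTheory.volume (z (j-1)) (z j) := by
      apply ContinuousOn.intervalIntegrable
      rw [Set.uIcc_of_le hle]
      exact a.contd j h1 h2
    have heq : (∫ s in (z (j-1))..(z j), a.dpiece j s)
        = a.piece j (z j) - a.piece j (z (j-1)) :=
      intervalIntegral.integral_eq_sub_of_hasDerivAt
        (fun x hx => a.smooth j h1 h2 x (by rwa [Set.uIcc_of_le hle] at hx)) hint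
    calc |a.piece j (z j) - a.piece j (z (j-1))|
        = |∫ s in (z (j-1))..(z j), a.dpiece j s| := by rw [heq]
      _ ≤ ∫ s in (z (j-1))..(z j), |a.dpiece j s| :=
          intervalIntegral.abs_integral_le_integral_abs hle
  -- the right limits agree
  have hlimR : ∀ j, j < N → ta.limR j = a.limR j := by
    intro j hj
    have h1 : 1 ≤ j + 1 := by omega
    have h2 : j + 1 ≤ N := hj
    have hmem : z j ∈ Set.Icc (z ((j+1)-1)) (z (j+1)) := by
      simp only [Nat.add_sub_cancel]
      exact ⟨le_refl _, (hzmono j hj).le⟩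
    rcases htilde (j+1) h1 h2 with ⟨_, hp, _⟩ | ⟨_, hp, _⟩
    · exact hp (z j) hmem
    · have := hp (z j) hmem
      simpa [PW1.limR, Nat.add_sub_cancel] using this
  -- jump comparison
  have hJump : ∀ j, 1 ≤ j → j ≤ N - 1 → |ta.jump j| ≤ |a.jump j|
      + ((∫ s in (z (j-1))..(z j), |a.dpiece j s|)
          - ∫ s in (z (j-1))..(z j), |ta.dpiece j s|) := by
    intro j h1 h2
    have hjN : j ≤ N := by omega
    have hR := hlimR j (by omega)
    rcases htilde j h1 hjN with ⟨_, hp, hd⟩ | ⟨_, hp, hd⟩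
    · have hL : ta.limL j = a.limL j := hp (z j) ⟨hmono j h1 hjN, le_refl _⟩
      have heq : (∫ s in (z (j-1))..(z j), |ta.dpiece j s|) =
          ∫ s in (z (j-1))..(z j), |a.dpiece j s| := by
        apply intervalIntegral.integral_congr
        intro x hx
        rw [Set.uIcc_of_le (hmono j h1 hjN)] at hx
        simp [hd x hx]
      simp [PW1.jump, hL, hR, heq]
    · have hL : ta.limL j = a.piece j (z (j-1)) := hp (z j) ⟨hmono j h1 hjN, le_refl _⟩
      have h0 : (∫ s in (z (j-1))..(z j), |ta.dpiece j s|) = 0 := by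
        have heq : (∫ s in (z (j-1))..(z j), |ta.dpiece j s|) =
            ∫ s in (z (j-1))..(z j), (0 : ℝ) := by
          apply intervalIntegral.integral_congr
          intro x hx
          rw [Set.uIcc_of_le (hmono j h1 hjN)] at hx
          simp [hd x hx]
        simp [heq]
      have hF := hFTC j h1 hjN
      rw [PW1.jump, PW1.jump, hL, hR, h0]
      have htri : |a.piece j (z (j-1)) - a.limR j| ≤
          |a.piece j (z (j-1)) - a.limL j| + |a.limL j - a.limR j| :=
        abs_sub_le _ _ _
      have hswap : |a.piece j (z (j-1)) - a.limL j|
          = |a.piece j (z j) - a.piece j (z (j-1))| := by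
        rw [abs_sub_comm]; rfl
      rw [hswap] at htri
      linarith
  -- assemble
  unfold PW1.var
  have hsub : Finset.Icc 1 (N-1) ⊆ Finset.Icc 1 N :=
    Finset.Icc_subset_Icc_right (by omega)
  have A : (∑ j ∈ Finset.Icc 1 (N-1), |ta.jump j|) ≤
      ∑ j ∈ Finset.Icc 1 (N-1), (|a.jump j|
        + ((∫ s in (z (j-1))..(z j), |a.dpiece j s|)
            - ∫ s in (z (j-1))..(z j), |ta.dpiece j s|)) := by
    apply Finset.sum_le_sum
    intro j hj
    rw [Finset.mem_Icc] at hj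
    exact hJump j hj.1 hj.2
  have B : (∑ j ∈ Finset.Icc 1 (N-1),
        ((∫ s in (z (j-1))..(z j), |a.dpiece j s|)
          - ∫ s in (z (j-1))..(z j), |ta.dpiece j s|)) ≤
      ∑ j ∈ Finset.Icc 1 N,
        ((∫ s in (z (j-1))..(z j), |a.dpiece j s|)
          - ∫ s in (z (j-1))..(z j), |ta.dpiece j s|) := by
    apply Finset.sum_le_sum_of_subset_of_nonneg hsub
    intro j hj _
    rw [Finset.mem_Icc] at hj
    exact sub_nonneg.2 (hInt j hj.1 hj.2)
  simp only [Finset.sum_add_distrib, Finset.sum_sub_distrib] at A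
  simp only [Finset.sum_sub_distrib] at B
  linarith
end

section
/- Under the coefficient assumptions, the function q defined from a, c via the numbers A_j is increasing on [-L, L] with q^+(-L) = 0, and it satisfies: ∂_pw(q/a)(x) ≥ 1/a(x) and ∂_pw(q/c²)(x) ≥ 1/c²(x) for all x in each τ_j, and at every interior break point z_j (1 ≤ j ≤ N-1), [q/a]_{z_j} ≤ 0 and [q/c²]_{z_j} ≤ 0. -/
open MeasureTheory

namespace PW1

variable {N : ℕ} {z : ℕ → ℝ}

/-- the product `ã c̃²` on piece `j` -/
noncomputable def Pfun (ta tc : PW1 N z) (j : ℕ) (x : ℝ) : ℝ :=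
  ta.piece j x * (tc.piece j x)^2

/-- the regular derivative of `ã c̃²` on piece `j` -/
noncomputable def dPfun (ta tc : PW1 N z) (j : ℕ) (x : ℝ) : ℝ :=
  ta.dpiece j x * (tc.piece j x)^2
    + ta.piece j x * (2 * tc.piece j x * tc.dpiece j x)

end PW1

set_option maxHeartbeats 800000 in
/-- Lemma `lem:q`: under the coefficient assumptions, the function `q`
built from `a, c` via the numbers `A_j` is increasing on `[-L, L]` (monotone on each
subinterval and with nonnegative jumps at the break points), satisfies `q⁺(-L) = 0`,
`∂_pw(q/a) ≥ 1/a` and `∂_pw(q/c²) ≥ 1/c²` on each `τ_j`, and has nonpositive jumps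
`[q/a]_{z_j} ≤ 0`, `[q/c²]_{z_j} ≤ 0` at each interior break point. -/
theorem stmt3 (L : ℝ) (hL : 0 < L) (N : ℕ) (hN : 1 ≤ N) (z : ℕ → ℝ)
    (hz0 : z 0 = -L) (hzN : z N = L) (hzmono : ∀ j < N, z j < z (j+1))
    (amin amax cmin cmax : ℝ) (hamin : 0 < amin) (hamax : amin ≤ amax)
    (hcmin : 0 < cmin) (hcmax : cmin ≤ cmax)
    (a c : PW1 N z)
    (hab : ∀ j, 1 ≤ j → j ≤ N → ∀ x ∈ Set.Icc (z (j-1)) (z j),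
      amin ≤ a.piece j x ∧ a.piece j x ≤ amax)
    (hcb : ∀ j, 1 ≤ j → j ≤ N → ∀ x ∈ Set.Icc (z (j-1)) (z j),
      cmin ≤ c.piece j x ∧ c.piece j x ≤ cmax)
    (hasign : a.OneSigned) (hcsign : c.OneSigned)
    (ta tc : PW1 N z) (hta : a.IsTilde ta) (htc : c.IsTilde tc) :
    (∀ j, 1 ≤ j → j ≤ N →
      MonotoneOn (PW1.qpiece ta tc a c j) (Set.Icc (z (j-1)) (z j))) ∧
    (∀ j, 1 ≤ j → j ≤ N - 1 →
      PW1.qpiece ta tc a c j (z j) ≤ PW1.qpiece ta tc a c (j+1) (z j)) ∧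
    PW1.qpiece ta tc a c 1 (z 0) = 0 ∧
    (∀ j, 1 ≤ j → j ≤ N → ∀ x ∈ Set.Ioo (z (j-1)) (z j),
      1 / a.piece j x ≤ deriv (fun y => PW1.qpiece ta tc a c j y / a.piece j y) x) ∧
    (∀ j, 1 ≤ j → j ≤ N → ∀ x ∈ Set.Ioo (z (j-1)) (z j),
      1 / (c.piece j x)^2 ≤
        deriv (fun y => PW1.qpiece ta tc a c j y / (c.piece j y)^2) x) ∧
    (∀ j, 1 ≤ j → j ≤ N - 1 →
      PW1.qpiece ta tc a c j (z j) / a.limL j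
        - PW1.qpiece ta tc a c (j+1) (z j) / a.limR j ≤ 0) ∧
    (∀ j, 1 ≤ j → j ≤ N - 1 →
      PW1.qpiece ta tc a c j (z j) / (c.limL j)^2
        - PW1.qpiece ta tc a c (j+1) (z j) / (c.limR j)^2 ≤ 0) := by
    classical
  -- partition facts
  have hzlt : ∀ j, 1 ≤ j → j ≤ N → z (j-1) < z j := by
    intro j h1 h2
    have h := hzmono (j-1) (by omega)
    have hj : j - 1 + 1 = j := by omega
    rwa [hj] at h
  have hzle : ∀ j, 1 ≤ j → j ≤ N → z (j-1) ≤ z j := fun j h1 h2 => (hzlt j h1 h2).le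
  -- bounds for the tilde coefficients
  have htab : ∀ j, 1 ≤ j → j ≤ N → ∀ x ∈ Set.Icc (z (j-1)) (z j),
      amin ≤ ta.piece j x ∧ ta.piece j x ≤ amax := by
    intro j h1 h2 x hx
    rcases hta j h1 h2 with ⟨_, hp, _⟩ | ⟨_, hp, _⟩
    · rw [hp x hx]; exact hab j h1 h2 x hx
    · rw [hp x hx]; exact hab j h1 h2 _ ⟨le_refl _, hzle j h1 h2⟩
  have htcb : ∀ j, 1 ≤ j → j ≤ N → ∀ x ∈ Set.Icc (z (j-1)) (z j),
      cmin ≤ tc.piece j x ∧ tc.piece j x ≤ cmax := by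
    intro j h1 h2 x hx
    rcases htc j h1 h2 with ⟨_, hp, _⟩ | ⟨_, hp, _⟩
    · rw [hp x hx]; exact hcb j h1 h2 x hx
    · rw [hp x hx]; exact hcb j h1 h2 _ ⟨le_refl _, hzle j h1 h2⟩
  have htapos : ∀ j, 1 ≤ j → j ≤ N → ∀ x ∈ Set.Icc (z (j-1)) (z j), 0 < ta.piece j x :=
    fun j h1 h2 x hx => lt_of_lt_of_le hamin (htab j h1 h2 x hx).1
  have htcpos : ∀ j, 1 ≤ j → j ≤ N → ∀ x ∈ Set.Icc (z (j-1)) (z j), 0 < tc.piece j x :=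
    fun j h1 h2 x hx => lt_of_lt_of_le hcmin (htcb j h1 h2 x hx).1
  have hPpos : ∀ j, 1 ≤ j → j ≤ N → ∀ x ∈ Set.Icc (z (j-1)) (z j),
      0 < PW1.Pfun ta tc j x := by
    intro j h1 h2 x hx
    have h3 := htapos j h1 h2 x hx
    have h4 := htcpos j h1 h2 x hx
    unfold PW1.Pfun
    positivity
  -- sign of the tilde derivatives
  have htad : ∀ j, 1 ≤ j → j ≤ N → ∀ x ∈ Set.Ioo (z (j-1)) (z j), 0 ≤ ta.dpiece j x := by
    intro j h1 h2 x hx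
    rcases hta j h1 h2 with ⟨hpos, _, hd⟩ | ⟨_, _, hd⟩
    · rw [hd x (Set.Ioo_subset_Icc_self hx)]; exact (hpos x hx).le
    · rw [hd x (Set.Ioo_subset_Icc_self hx)]
  have htcd : ∀ j, 1 ≤ j → j ≤ N → ∀ x ∈ Set.Ioo (z (j-1)) (z j), 0 ≤ tc.dpiece j x := by
    intro j h1 h2 x hx
    rcases htc j h1 h2 with ⟨hpos, _, hd⟩ | ⟨_, _, hd⟩
    · rw [hd x (Set.Ioo_subset_Icc_self hx)]; exact (hpos x hx).le
    · rw [hd x (Set.Ioo_subset_Icc_self hx)]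
  -- P is differentiable
  have hPderiv : ∀ j, 1 ≤ j → j ≤ N → ∀ x ∈ Set.Icc (z (j-1)) (z j),
      HasDerivAt (PW1.Pfun ta tc j) (PW1.dPfun ta tc j x) x := by
    intro j h1 h2 x hx
    have hd := (ta.smooth j h1 h2 x hx).mul ((tc.smooth j h1 h2 x hx).pow 2)
    refine hd.congr_deriv ?_
    unfold PW1.dPfun
    push_cast [Pi.pow_apply]
    ring
  have hdPpos : ∀ j, 1 ≤ j → j ≤ N → ∀ x ∈ Set.Ioo (z (j-1)) (z j),
      0 ≤ PW1.dPfun ta tc j x := by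
    intro j h1 h2 x hx
    have hxI := Set.Ioo_subset_Icc_self hx
    have h1' := htad j h1 h2 x hx
    have h2' := htcd j h1 h2 x hx
    have h3 := htapos j h1 h2 x hxI
    have h4 := htcpos j h1 h2 x hxI
    have t1 : 0 ≤ ta.dpiece j x * (tc.piece j x)^2 := mul_nonneg h1' (sq_nonneg _)
    have t2 : 0 ≤ ta.piece j x * (2 * tc.piece j x * tc.dpiece j x) :=
      mul_nonneg h3.le (mul_nonneg (mul_nonneg (by norm_num) h4.le) h2')
    unfold PW1.dPfun
    linarith
  -- continuity of 1/P at points of the interval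
  have hhcontAt : ∀ j, 1 ≤ j → j ≤ N → ∀ x ∈ Set.Icc (z (j-1)) (z j),
      ContinuousAt (fun s => 1 / PW1.Pfun ta tc j s) x := by
    intro j h1 h2 x hx
    exact continuousAt_const.div (hPderiv j h1 h2 x hx).continuousAt (hPpos j h1 h2 x hx).ne'
  have hhcontOn : ∀ j, 1 ≤ j → j ≤ N →
      ContinuousOn (fun s => 1 / PW1.Pfun ta tc j s) (Set.Icc (z (j-1)) (z j)) :=
    fun j h1 h2 x hx => (hhcontAt j h1 h2 x hx).continuousWithinAt
  have hhint : ∀ j, 1 ≤ j → j ≤ N → ∀ x ∈ Set.Icc (z (j-1)) (z j),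
      IntervalIntegrable (fun s => 1 / PW1.Pfun ta tc j s) volume (z (j-1)) x := by
    intro j h1 h2 x hx
    apply ContinuousOn.intervalIntegrable
    apply (hhcontOn j h1 h2).mono
    rw [Set.uIcc_of_le hx.1]
    exact Set.Icc_subset_Icc_right hx.2
  -- nonnegativity of Ival and Aseq
  have hIval : ∀ j, 1 ≤ j → j ≤ N → 0 ≤ PW1.Ival ta tc j := by
    intro j h1 h2
    apply intervalIntegral.integral_nonneg (hzle j h1 h2)
    intro s hs
    have h := hPpos j h1 h2 s hs
    unfold PW1.Pfun at h
    exact (one_div_pos.mpr h).le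
  have halpha1 : ∀ j, (1:ℝ) ≤ PW1.alphaJ ta j := fun j => le_max_right _ _
  have hsigma1 : ∀ j, (1:ℝ) ≤ PW1.sigmaJ tc j := fun j => le_max_right _ _
  have hgamma1 : ∀ j, (1:ℝ) ≤ PW1.gammaJ a c j := fun j => le_max_right _ _
  have hAnn : ∀ j, j ≤ N → 0 ≤ PW1.Aseq ta tc a c j := by
    intro j
    induction j with
    | zero => intro _; simp [PW1.Aseq]
    | succ n ih =>
      intro hn
      cases n with
      | zero => simp [PW1.Aseq]
      | succ m =>
        have h1 := ih (by omega)
        have h2 := hIval (m+1) (by omega) (by omega)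
        have h3 := halpha1 (m+1)
        have h4 := hsigma1 (m+1)
        have h5 := hgamma1 (m+1)
        show 0 ≤ PW1.alphaJ ta (m+1) * PW1.sigmaJ tc (m+1) * PW1.gammaJ a c (m+1)
          * (PW1.Ival ta tc (m+1) + PW1.Aseq ta tc a c (m+1))
        exact mul_nonneg (mul_nonneg (mul_nonneg (by linarith) (by linarith)) (by linarith))
          (by linarith)
  -- the F-term is nonnegative
  have hTnn : ∀ j, 1 ≤ j → j ≤ N → ∀ x ∈ Set.Icc (z (j-1)) (z j),
      0 ≤ (∫ s in (z (j-1))..x, 1 / PW1.Pfun ta tc j s) + PW1.Aseq ta tc a c j := by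
    intro j h1 h2 x hx
    have hi : 0 ≤ ∫ s in (z (j-1))..x, 1 / PW1.Pfun ta tc j s := by
      apply intervalIntegral.integral_nonneg hx.1
      intro s hs
      exact (one_div_pos.mpr (hPpos j h1 h2 s ⟨hs.1, hs.2.trans hx.2⟩)).le
    linarith [hAnn j h2]
  -- derivative of the primitive
  have hFderiv : ∀ j, 1 ≤ j → j ≤ N → ∀ x ∈ Set.Ioo (z (j-1)) (z j),
      HasDerivAt (fun y => ∫ s in (z (j-1))..y, 1 / PW1.Pfun ta tc j s)
        (1 / PW1.Pfun ta tc j x) x := by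
    intro j h1 h2 x hx
    have hxI := Set.Ioo_subset_Icc_self hx
    exact intervalIntegral.integral_hasDerivAt_right (hhint j h1 h2 x hxI)
      (ContinuousAt.stronglyMeasurableAtFilter isOpen_Ioo
        (fun y hy => hhcontAt j h1 h2 y (Set.Ioo_subset_Icc_self hy)) x hx)
      (hhcontAt j h1 h2 x hxI)
  -- derivative of q
  have hqderiv : ∀ j, 1 ≤ j → j ≤ N → ∀ x ∈ Set.Ioo (z (j-1)) (z j),
      HasDerivAt (PW1.qpiece ta tc a c j)
        (PW1.dPfun ta tc j x
          * ((∫ s in (z (j-1))..x, 1 / PW1.Pfun ta tc j s) + PW1.Aseq ta tc a c j) + 1) x := by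
    intro j h1 h2 x hx
    have hxI := Set.Ioo_subset_Icc_self hx
    have hd := (hPderiv j h1 h2 x hxI).mul
      ((hFderiv j h1 h2 x hx).add_const (PW1.Aseq ta tc a c j))
    have hne : PW1.Pfun ta tc j x ≠ 0 := (hPpos j h1 h2 x hxI).ne'
    have he : PW1.Pfun ta tc j x * (1 / PW1.Pfun ta tc j x) = 1 := by field_simp
    rw [he] at hd
    exact hd
  -- continuity of q
  have hqcont : ∀ j, 1 ≤ j → j ≤ N →
      ContinuousOn (PW1.qpiece ta tc a c j) (Set.Icc (z (j-1)) (z j)) := by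
    intro j h1 h2
    have hPc : ContinuousOn (PW1.Pfun ta tc j) (Set.Icc (z (j-1)) (z j)) :=
      fun x hx => (hPderiv j h1 h2 x hx).continuousAt.continuousWithinAt
    have hInt : IntegrableOn (fun s => 1 / PW1.Pfun ta tc j s)
        (Set.uIcc (z (j-1)) (z j)) volume := by
      rw [Set.uIcc_of_le (hzle j h1 h2)]
      exact (hhcontOn j h1 h2).integrableOn_Icc
    have hFc := intervalIntegral.continuousOn_primitive_interval hInt
    rw [Set.uIcc_of_le (hzle j h1 h2)] at hFc
    exact hPc.mul (hFc.add continuousOn_const)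
  -- monotonicity
  have hmono : ∀ j, 1 ≤ j → j ≤ N →
      MonotoneOn (PW1.qpiece ta tc a c j) (Set.Icc (z (j-1)) (z j)) := by
    intro j h1 h2
    apply monotoneOn_of_deriv_nonneg (convex_Icc _ _) (hqcont j h1 h2)
    · rw [interior_Icc]
      exact fun x hx => (hqderiv j h1 h2 x hx).differentiableAt.differentiableWithinAt
    · rw [interior_Icc]
      intro x hx
      rw [(hqderiv j h1 h2 x hx).deriv]
      have := mul_nonneg (hdPpos j h1 h2 x hx) (hTnn j h1 h2 x (Set.Ioo_subset_Icc_self hx))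
      linarith
  -- value at the left endpoint
  have hq0 : PW1.qpiece ta tc a c 1 (z 0) = 0 := by
    have hA1 : PW1.Aseq ta tc a c 1 = 0 := rfl
    simp [PW1.qpiece, hA1, intervalIntegral.integral_same]
  -- derivative inequality for q/a
  have hqa : ∀ j, 1 ≤ j → j ≤ N → ∀ x ∈ Set.Ioo (z (j-1)) (z j),
      1 / a.piece j x ≤ deriv (fun y => PW1.qpiece ta tc a c j y / a.piece j y) x := by
    intro j h1 h2 x hx
    have hxI := Set.Ioo_subset_Icc_self hx
    have haP : 0 < a.piece j x := lt_of_lt_of_le hamin (hab j h1 h2 x hxI).1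
    have hd := (hqderiv j h1 h2 x hx).div (a.smooth j h1 h2 x hxI) haP.ne'
    rw [(show HasDerivAt (fun y => PW1.qpiece ta tc a c j y / a.piece j y) _ x from hd).deriv]
    have hTn : 0 ≤ (∫ s in (z (j-1))..x, 1 / PW1.Pfun ta tc j s) + PW1.Aseq ta tc a c j :=
      hTnn j h1 h2 x hxI
    have hqx : PW1.qpiece ta tc a c j x = PW1.Pfun ta tc j x
        * ((∫ s in (z (j-1))..x, 1 / PW1.Pfun ta tc j s) + PW1.Aseq ta tc a c j) := rfl
    rw [hqx]
    have hPp := hPpos j h1 h2 x hxI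
    have key : 0 ≤ PW1.dPfun ta tc j x * a.piece j x
        - PW1.Pfun ta tc j x * a.dpiece j x := by
      have h4 := htcpos j h1 h2 x hxI
      have h5 := htcd j h1 h2 x hx
      rcases hta j h1 h2 with ⟨hpos, hp, hdp⟩ | ⟨hneg, hp, hdp⟩
      · have e : PW1.dPfun ta tc j x * a.piece j x - PW1.Pfun ta tc j x * a.dpiece j x
            = (a.piece j x)^2 * (2 * tc.piece j x * tc.dpiece j x) := by
          unfold PW1.dPfun PW1.Pfun
          rw [hp x hxI, hdp x hxI]
          ring
        rw [e]
        exact mul_nonneg (sq_nonneg _) (mul_nonneg (mul_nonneg (by norm_num) h4.le) h5)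
      · have hda := hneg x hx
        have h3 := htapos j h1 h2 x hxI
        have t1 : 0 ≤ PW1.dPfun ta tc j x := by
          have e : PW1.dPfun ta tc j x
              = ta.piece j x * (2 * tc.piece j x * tc.dpiece j x) := by
            unfold PW1.dPfun
            rw [hdp x hxI]
            ring
          rw [e]
          exact mul_nonneg h3.le (mul_nonneg (mul_nonneg (by norm_num) h4.le) h5)
        nlinarith [mul_nonneg hPp.le (neg_nonneg.mpr hda), mul_nonneg t1 haP.le]
    have expand : ((PW1.dPfun ta tc j x
          * ((∫ s in (z (j-1))..x, 1 / PW1.Pfun ta tc j s) + PW1.Aseq ta tc a c j) + 1)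
            * a.piece j x
          - PW1.Pfun ta tc j x
            * ((∫ s in (z (j-1))..x, 1 / PW1.Pfun ta tc j s) + PW1.Aseq ta tc a c j)
            * a.dpiece j x) / a.piece j x ^ 2
        = 1 / a.piece j x
          + ((PW1.dPfun ta tc j x * a.piece j x - PW1.Pfun ta tc j x * a.dpiece j x)
              * ((∫ s in (z (j-1))..x, 1 / PW1.Pfun ta tc j s) + PW1.Aseq ta tc a c j))
            / a.piece j x ^ 2 := by
      field_simp
      ring
    rw [expand]
    have hnn : 0 ≤ ((PW1.dPfun ta tc j x * a.piece j x - PW1.Pfun ta tc j x * a.dpiece j x)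
        * ((∫ s in (z (j-1))..x, 1 / PW1.Pfun ta tc j s) + PW1.Aseq ta tc a c j))
          / a.piece j x ^ 2 := div_nonneg (mul_nonneg key hTn) (sq_nonneg _)
    linarith
  -- derivative inequality for q/c²
  have hqc : ∀ j, 1 ≤ j → j ≤ N → ∀ x ∈ Set.Ioo (z (j-1)) (z j),
      1 / (c.piece j x)^2
        ≤ deriv (fun y => PW1.qpiece ta tc a c j y / (c.piece j y)^2) x := by
    intro j h1 h2 x hx
    have hxI := Set.Ioo_subset_Icc_self hx
    have hcP : 0 < c.piece j x := lt_of_lt_of_le hcmin (hcb j h1 h2 x hxI).1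
    have hccP : (0:ℝ) < (c.piece j x)^2 := pow_pos hcP 2
    have hcd : HasDerivAt (fun y => (c.piece j y)^2) (2 * c.piece j x * c.dpiece j x) x := by
      have hd2 := (c.smooth j h1 h2 x hxI).pow 2
      refine hd2.congr_deriv ?_
      push_cast
      ring
    have hd := (hqderiv j h1 h2 x hx).div hcd hccP.ne'
    rw [(show HasDerivAt (fun y => PW1.qpiece ta tc a c j y / (c.piece j y)^2) _ x from hd).deriv]
    have hTn : 0 ≤ (∫ s in (z (j-1))..x, 1 / PW1.Pfun ta tc j s) + PW1.Aseq ta tc a c j :=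
      hTnn j h1 h2 x hxI
    have hqx : PW1.qpiece ta tc a c j x = PW1.Pfun ta tc j x
        * ((∫ s in (z (j-1))..x, 1 / PW1.Pfun ta tc j s) + PW1.Aseq ta tc a c j) := rfl
    rw [hqx]
    have hPp := hPpos j h1 h2 x hxI
    have key : 0 ≤ PW1.dPfun ta tc j x * (c.piece j x)^2
        - PW1.Pfun ta tc j x * (2 * c.piece j x * c.dpiece j x) := by
      have h3 := htapos j h1 h2 x hxI
      have h5 := htad j h1 h2 x hx
      rcases htc j h1 h2 with ⟨hpos, hp, hdp⟩ | ⟨hneg, hp, hdp⟩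
      · have e : PW1.dPfun ta tc j x * (c.piece j x)^2
            - PW1.Pfun ta tc j x * (2 * c.piece j x * c.dpiece j x)
            = ta.dpiece j x * (c.piece j x)^4 := by
          unfold PW1.dPfun PW1.Pfun
          rw [hp x hxI, hdp x hxI]
          ring
        rw [e]
        exact mul_nonneg h5 (by positivity)
      · have hdc := hneg x hx
        have t1 : 0 ≤ PW1.dPfun ta tc j x := by
          have e : PW1.dPfun ta tc j x = ta.dpiece j x * (tc.piece j x)^2 := by
            unfold PW1.dPfun
            rw [hdp x hxI]
            ring
          rw [e]
          exact mul_nonneg h5 (sq_nonneg _)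
        have a1 : 0 ≤ PW1.dPfun ta tc j x * (c.piece j x)^2 := mul_nonneg t1 (sq_nonneg _)
        have a2 : 0 ≤ PW1.Pfun ta tc j x * (2 * c.piece j x * (-(c.dpiece j x))) :=
          mul_nonneg hPp.le (mul_nonneg (mul_nonneg (by norm_num) hcP.le)
            (neg_nonneg.mpr hdc))
        nlinarith [a1, a2]
    have expand : ((PW1.dPfun ta tc j x
          * ((∫ s in (z (j-1))..x, 1 / PW1.Pfun ta tc j s) + PW1.Aseq ta tc a c j) + 1)
            * (c.piece j x)^2
          - PW1.Pfun ta tc j x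
            * ((∫ s in (z (j-1))..x, 1 / PW1.Pfun ta tc j s) + PW1.Aseq ta tc a c j)
            * (2 * c.piece j x * c.dpiece j x)) / ((c.piece j x)^2) ^ 2
        = 1 / (c.piece j x)^2
          + ((PW1.dPfun ta tc j x * (c.piece j x)^2
              - PW1.Pfun ta tc j x * (2 * c.piece j x * c.dpiece j x))
              * ((∫ s in (z (j-1))..x, 1 / PW1.Pfun ta tc j s) + PW1.Aseq ta tc a c j))
            / ((c.piece j x)^2) ^ 2 := by
      field_simp
      ring
    rw [expand]
    have hnn : 0 ≤ ((PW1.dPfun ta tc j x * (c.piece j x)^2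
        - PW1.Pfun ta tc j x * (2 * c.piece j x * c.dpiece j x))
        * ((∫ s in (z (j-1))..x, 1 / PW1.Pfun ta tc j s) + PW1.Aseq ta tc a c j))
          / ((c.piece j x)^2) ^ 2 := div_nonneg (mul_nonneg key hTn) (by positivity)
    linarith
  -- recursion formula for Aseq
  have hAseqSucc : ∀ j, 1 ≤ j → PW1.Aseq ta tc a c (j+1)
      = PW1.alphaJ ta j * PW1.sigmaJ tc j * PW1.gammaJ a c j
        * (PW1.Ival ta tc j + PW1.Aseq ta tc a c j) := by
    intro j h1
    obtain ⟨m, rfl⟩ : ∃ m, j = m + 1 := ⟨j - 1, by omega⟩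
    rfl
  -- the break-point estimates
  have hbreak : ∀ j, 1 ≤ j → j ≤ N - 1 →
      (PW1.qpiece ta tc a c j (z j) ≤ PW1.qpiece ta tc a c (j+1) (z j)) ∧
      (PW1.qpiece ta tc a c j (z j) / a.limL j
        - PW1.qpiece ta tc a c (j+1) (z j) / a.limR j ≤ 0) ∧
      (PW1.qpiece ta tc a c j (z j) / (c.limL j)^2
        - PW1.qpiece ta tc a c (j+1) (z j) / (c.limR j)^2 ≤ 0) := by
    intro j h1 h2
    have hjN : j ≤ N := by omega
    have hj1N : j + 1 ≤ N := by omega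
    have hmemL : z j ∈ Set.Icc (z (j-1)) (z j) := Set.right_mem_Icc.mpr (hzle j h1 hjN)
    have hmemR : z j ∈ Set.Icc (z (j+1-1)) (z (j+1)) :=
      Set.left_mem_Icc.mpr (hzle (j+1) (by omega) hj1N)
    have htaL : 0 < ta.piece j (z j) := htapos j h1 hjN _ hmemL
    have htaR : 0 < ta.piece (j+1) (z j) := htapos (j+1) (by omega) hj1N _ hmemR
    have htcL : 0 < tc.piece j (z j) := htcpos j h1 hjN _ hmemL
    have htcR : 0 < tc.piece (j+1) (z j) := htcpos (j+1) (by omega) hj1N _ hmemR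
    have haL : 0 < a.piece j (z j) := lt_of_lt_of_le hamin (hab j h1 hjN _ hmemL).1
    have haR : 0 < a.piece (j+1) (z j) :=
      lt_of_lt_of_le hamin (hab (j+1) (by omega) hj1N _ hmemR).1
    have hcL : 0 < c.piece j (z j) := lt_of_lt_of_le hcmin (hcb j h1 hjN _ hmemL).1
    have hcR : 0 < c.piece (j+1) (z j) :=
      lt_of_lt_of_le hcmin (hcb (j+1) (by omega) hj1N _ hmemR).1
    have hT0 : 0 ≤ PW1.Ival ta tc j + PW1.Aseq ta tc a c j :=
      add_nonneg (hIval j h1 hjN) (hAnn j hjN)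
    have hα := halpha1 j
    have hσ := hsigma1 j
    have hγ := hgamma1 j
    have hA : ta.piece j (z j) ≤ PW1.alphaJ ta j * ta.piece (j+1) (z j) := by
      unfold PW1.alphaJ PW1.limL PW1.limR
      exact (div_le_iff₀ htaR).mp (le_max_left _ _)
    have hS : (tc.piece j (z j))^2 ≤ PW1.sigmaJ tc j * (tc.piece (j+1) (z j))^2 := by
      unfold PW1.sigmaJ PW1.limL PW1.limR
      exact (div_le_iff₀ (pow_pos htcR 2)).mp (le_max_left _ _)
    have hGa : a.piece (j+1) (z j) ≤ PW1.gammaJ a c j * a.piece j (z j) := by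
      unfold PW1.gammaJ PW1.limL PW1.limR
      exact (div_le_iff₀ haL).mp ((le_max_left _ _).trans (le_max_left _ _))
    have hGc : (c.piece (j+1) (z j))^2 ≤ PW1.gammaJ a c j * (c.piece j (z j))^2 := by
      unfold PW1.gammaJ PW1.limL PW1.limR
      exact (div_le_iff₀ (pow_pos hcL 2)).mp ((le_max_right _ _).trans (le_max_left _ _))
    have hrec := hAseqSucc j h1
    set al := PW1.alphaJ ta j with hal
    set sg := PW1.sigmaJ tc j with hsg
    set ga := PW1.gammaJ a c j with hga
    set T := PW1.Ival ta tc j + PW1.Aseq ta tc a c j with hTdef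
    have hqL : PW1.qpiece ta tc a c j (z j)
        = ta.piece j (z j) * (tc.piece j (z j))^2 * T := by
      rw [hTdef]; rfl
    have hqR : PW1.qpiece ta tc a c (j+1) (z j)
        = ta.piece (j+1) (z j) * (tc.piece (j+1) (z j))^2 * (al * sg * ga * T) := by
      unfold PW1.qpiece
      simp only [Nat.add_sub_cancel, intervalIntegral.integral_same, zero_add]
      rw [hrec]
    have m1 : ta.piece j (z j) * (tc.piece j (z j))^2
        ≤ (al * ta.piece (j+1) (z j)) * (sg * (tc.piece (j+1) (z j))^2) :=
      mul_le_mul hA hS (sq_nonneg _) (mul_nonneg (by linarith) htaR.le)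
    refine ⟨?_, ?_, ?_⟩
    · rw [hqL, hqR]
      have m2 := mul_le_mul_of_nonneg_right m1 hT0
      have hX : 0 ≤ (al * ta.piece (j+1) (z j)) * (sg * (tc.piece (j+1) (z j))^2) * T :=
        mul_nonneg (mul_nonneg (mul_nonneg (by linarith) htaR.le)
          (mul_nonneg (by linarith) (sq_nonneg _))) hT0
      nlinarith [m2, mul_nonneg hX (by linarith : (0:ℝ) ≤ ga - 1)]
    · rw [hqL, hqR]
      unfold PW1.limL PW1.limR
      rw [sub_nonpos, div_le_div_iff₀ haL haR]
      have m2 : ta.piece j (z j) * (tc.piece j (z j))^2 * a.piece (j+1) (z j)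
          ≤ (al * ta.piece (j+1) (z j)) * (sg * (tc.piece (j+1) (z j))^2)
            * (ga * a.piece j (z j)) :=
        mul_le_mul m1 hGa haR.le
          (mul_nonneg (mul_nonneg (by linarith) htaR.le)
            (mul_nonneg (by linarith) (sq_nonneg _)))
      nlinarith [mul_le_mul_of_nonneg_right m2 hT0]
    · rw [hqL, hqR]
      unfold PW1.limL PW1.limR
      rw [sub_nonpos, div_le_div_iff₀ (pow_pos hcL 2) (pow_pos hcR 2)]
      have m2 : ta.piece j (z j) * (tc.piece j (z j))^2 * (c.piece (j+1) (z j))^2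
          ≤ (al * ta.piece (j+1) (z j)) * (sg * (tc.piece (j+1) (z j))^2)
            * (ga * (c.piece j (z j))^2) :=
        mul_le_mul m1 hGc (sq_nonneg _)
          (mul_nonneg (mul_nonneg (by linarith) htaR.le)
            (mul_nonneg (by linarith) (sq_nonneg _)))
      nlinarith [mul_le_mul_of_nonneg_right m2 hT0]
  exact ⟨hmono, fun j h1 h2 => (hbreak j h1 h2).1, hq0, hqa, hqc,
    fun j h1 h2 => (hbreak j h1 h2).2.1, fun j h1 h2 => (hbreak j h1 h2).2.2⟩
end

section
/- Under the coefficient assumptions, the function q satisfies q^-(L) ≤ 2L · (a_max c_max²)/(a_min c_min²) · ( ∏_{ℓ=1}^{N-1} α_ℓ ) ( ∏_{ℓ=1}^{N-1} σ_ℓ ) ( ∏_{ℓ=1}^{N-1} γ_ℓ ). -/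
open MeasureTheory

lemma one_le_mul3 {x y w : ℝ} (hx : 1 ≤ x) (hy : 1 ≤ y) (hw : 1 ≤ w) :
    1 ≤ x * y * w := by
  have h1 : (1:ℝ) ≤ x * y := by nlinarith [mul_nonneg (sub_nonneg.mpr hx) (sub_nonneg.mpr hy)]
  nlinarith [mul_nonneg (sub_nonneg.mpr h1) (sub_nonneg.mpr hw)]

set_option maxHeartbeats 1600000 in
/-- under the coefficient assumptions, the left limit of `q` at `L`
satisfies `q⁻(L) ≤ 2L (a_max c_max²)/(a_min c_min²) ∏ α_ℓ ∏ σ_ℓ ∏ γ_ℓ`. -/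
theorem stmt5 (L : ℝ) (hL : 0 < L) (N : ℕ) (hN : 1 ≤ N) (z : ℕ → ℝ)
    (hz0 : z 0 = -L) (hzN : z N = L) (hzmono : ∀ j < N, z j < z (j+1))
    (amin amax cmin cmax : ℝ) (hamin : 0 < amin) (hamax : amin ≤ amax)
    (hcmin : 0 < cmin) (hcmax : cmin ≤ cmax)
    (a c : PW1 N z)
    (hab : ∀ j, 1 ≤ j → j ≤ N → ∀ x ∈ Set.Icc (z (j-1)) (z j),
      amin ≤ a.piece j x ∧ a.piece j x ≤ amax)
    (hcb : ∀ j, 1 ≤ j → j ≤ N → ∀ x ∈ Set.Icc (z (j-1)) (z j),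
      cmin ≤ c.piece j x ∧ c.piece j x ≤ cmax)
    (hasign : a.OneSigned) (hcsign : c.OneSigned)
    (ta tc : PW1 N z) (hta : a.IsTilde ta) (htc : c.IsTilde tc) :
    PW1.qpiece ta tc a c N (z N) ≤
      2 * L * (amax * cmax^2 / (amin * cmin^2))
        * (∏ l ∈ Finset.Icc 1 (N-1), PW1.alphaJ ta l)
        * (∏ l ∈ Finset.Icc 1 (N-1), PW1.sigmaJ tc l)
        * (∏ l ∈ Finset.Icc 1 (N-1), PW1.gammaJ a c l) := by
  classical
  set M : ℝ := amin * cmin ^ 2 with hM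
  have hMpos : 0 < M := by positivity
  have hzmono' : ∀ j, j ≤ N → ∀ i, i ≤ j → z i ≤ z j := by
    intro j
    induction j with
    | zero => intro _ i hi; interval_cases i; exact le_refl _
    | succ n ih =>
      intro hn i hi
      rcases Nat.lt_or_ge i (n+1) with h | h
      · exact le_trans (ih (by omega) i (by omega)) (hzmono n (by omega)).le
      · have : i = n + 1 := by omega
        rw [this]
  have hzle : ∀ j, 1 ≤ j → j ≤ N → z (j-1) ≤ z j :=
    fun j h1 h2 => hzmono' j h2 (j-1) (by omega)
  have hta_bd : ∀ j, 1 ≤ j → j ≤ N → ∀ x ∈ Set.Icc (z (j-1)) (z j),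
      amin ≤ ta.piece j x ∧ ta.piece j x ≤ amax := by
    intro j h1 h2 x hx
    rcases hta j h1 h2 with ⟨_, heq, _⟩ | ⟨_, heq, _⟩
    · rw [heq x hx]; exact hab j h1 h2 x hx
    · rw [heq x hx]
      exact hab j h1 h2 (z (j-1)) ⟨le_refl _, hzle j h1 h2⟩
  have htc_bd : ∀ j, 1 ≤ j → j ≤ N → ∀ x ∈ Set.Icc (z (j-1)) (z j),
      cmin ≤ tc.piece j x ∧ tc.piece j x ≤ cmax := by
    intro j h1 h2 x hx
    rcases htc j h1 h2 with ⟨_, heq, _⟩ | ⟨_, heq, _⟩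
    · rw [heq x hx]; exact hcb j h1 h2 x hx
    · rw [heq x hx]
      exact hcb j h1 h2 (z (j-1)) ⟨le_refl _, hzle j h1 h2⟩
  have hden : ∀ j, 1 ≤ j → j ≤ N → ∀ x ∈ Set.Icc (z (j-1)) (z j),
      M ≤ ta.piece j x * (tc.piece j x)^2 := by
    intro j h1 h2 x hx
    obtain ⟨ha1, _⟩ := hta_bd j h1 h2 x hx
    obtain ⟨hc1, _⟩ := htc_bd j h1 h2 x hx
    have h3 : cmin ^ 2 ≤ (tc.piece j x) ^ 2 := by nlinarith
    nlinarith
  have hcontI : ∀ j, 1 ≤ j → j ≤ N →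
      ContinuousOn (fun s => 1 / (ta.piece j s * (tc.piece j s)^2))
        (Set.Icc (z (j-1)) (z j)) := by
    intro j h1 h2
    have h3 : ContinuousOn (ta.piece j) (Set.Icc (z (j-1)) (z j)) :=
      fun x hx => (ta.smooth j h1 h2 x hx).continuousAt.continuousWithinAt
    have h4 : ContinuousOn (tc.piece j) (Set.Icc (z (j-1)) (z j)) :=
      fun x hx => (tc.smooth j h1 h2 x hx).continuousAt.continuousWithinAt
    exact continuousOn_const.div (h3.mul (h4.pow 2)) (fun x hx =>
      ne_of_gt (lt_of_lt_of_le hMpos (hden j h1 h2 x hx)))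
  have hInt : ∀ j, 1 ≤ j → j ≤ N →
      IntervalIntegrable (fun s => 1 / (ta.piece j s * (tc.piece j s)^2))
        MeasureTheory.volume (z (j-1)) (z j) := by
    intro j h1 h2
    apply ContinuousOn.intervalIntegrable
    rw [Set.uIcc_of_le (hzle j h1 h2)]
    exact hcontI j h1 h2
  have hIval_nonneg : ∀ j, 1 ≤ j → j ≤ N → 0 ≤ PW1.Ival ta tc j := by
    intro j h1 h2
    apply intervalIntegral.integral_nonneg (hzle j h1 h2)
    intro x hx
    have hpos : 0 < ta.piece j x * (tc.piece j x)^2 :=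
      lt_of_lt_of_le hMpos (hden j h1 h2 x hx)
    positivity
  have hIval_le : ∀ j, 1 ≤ j → j ≤ N →
      PW1.Ival ta tc j ≤ (z j - z (j-1)) / M := by
    intro j h1 h2
    have hle := hzle j h1 h2
    have h5 : PW1.Ival ta tc j ≤ ∫ _ in (z (j-1))..(z j), 1 / M := by
      apply intervalIntegral.integral_mono_on hle (hInt j h1 h2)
        intervalIntegrable_const
      intro x hx
      exact one_div_le_one_div_of_le hMpos (hden j h1 h2 x hx)
    rw [intervalIntegral.integral_const, smul_eq_mul] at h5
    calc PW1.Ival ta tc j ≤ (z j - z (j-1)) * (1 / M) := h5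
      _ = (z j - z (j-1)) / M := by ring
  have halpha1 : ∀ l, (1:ℝ) ≤ PW1.alphaJ ta l := fun l => le_max_right _ _
  have hsigma1 : ∀ l, (1:ℝ) ≤ PW1.sigmaJ tc l := fun l => le_max_right _ _
  have hgamma1 : ∀ l, (1:ℝ) ≤ PW1.gammaJ a c l := fun l => le_max_right _ _
  set P : ℕ → ℝ := fun j => ∏ l ∈ Finset.Icc 1 (j-1),
    (PW1.alphaJ ta l * PW1.sigmaJ tc l * PW1.gammaJ a c l) with hP
  have hP1 : ∀ j, (1:ℝ) ≤ P j := by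
    intro j
    simp only [hP]
    calc (1:ℝ) = ∏ _l ∈ Finset.Icc 1 (j-1), (1:ℝ) := Finset.prod_const_one.symm
      _ ≤ ∏ l ∈ Finset.Icc 1 (j-1),
          (PW1.alphaJ ta l * PW1.sigmaJ tc l * PW1.gammaJ a c l) :=
        Finset.prod_le_prod (fun _ _ => zero_le_one)
          (fun l _ => one_le_mul3 (halpha1 l) (hsigma1 l) (hgamma1 l))
  have hA : ∀ j, 1 ≤ j → j ≤ N →
      0 ≤ PW1.Aseq ta tc a c j ∧
      PW1.Aseq ta tc a c j ≤ P j * (z (j-1) - z 0) / M := by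
    intro j
    induction j with
    | zero => omega
    | succ k ih =>
      intro _ hkN
      rcases Nat.eq_zero_or_pos k with hk0 | hk1
      · subst hk0
        constructor
        · exact le_refl 0
        · show (0:ℝ) ≤ P 1 * (z 0 - z 0) / M
          simp
      · have hk2 : k ≤ N := by omega
        obtain ⟨h0, hle⟩ := ih hk1 hk2
        obtain ⟨m, rfl⟩ : ∃ m, k = m + 1 := ⟨k - 1, by omega⟩
        have hAdef : PW1.Aseq ta tc a c (m+1+1) =
            PW1.alphaJ ta (m+1) * PW1.sigmaJ tc (m+1) * PW1.gammaJ a c (m+1)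
              * (PW1.Ival ta tc (m+1) + PW1.Aseq ta tc a c (m+1)) := rfl
        have hPdef : P (m+1+1) = P (m+1) *
            (PW1.alphaJ ta (m+1) * PW1.sigmaJ tc (m+1) * PW1.gammaJ a c (m+1)) := by
          simp only [hP, Nat.add_sub_cancel]
          exact Finset.prod_Icc_succ_top (by omega) _
        have hI0 := hIval_nonneg (m+1) (by omega) hk2
        have hIle := hIval_le (m+1) (by omega) hk2
        have hprod1 : (1:ℝ) ≤ PW1.alphaJ ta (m+1) * PW1.sigmaJ tc (m+1)
            * PW1.gammaJ a c (m+1) :=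
          one_le_mul3 (halpha1 (m+1)) (hsigma1 (m+1)) (hgamma1 (m+1))
        have hz1 : z m ≤ z (m+1) := (hzmono m (by omega)).le
        have hz0' : z 0 ≤ z m := hzmono' m (by omega) 0 (by omega)
        have hP1' := hP1 (m+1)
        have hmsimp : (m + 1 - 1) = m := by omega
        rw [hmsimp] at hle hIle
        constructor
        · rw [hAdef]; nlinarith
        · rw [hAdef, hPdef, Nat.add_sub_cancel]
          have key : PW1.Ival ta tc (m+1) + PW1.Aseq ta tc a c (m+1)
              ≤ P (m+1) * (z (m+1) - z 0) / M := by
            have h6 : PW1.Ival ta tc (m+1) + PW1.Aseq ta tc a c (m+1)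
                ≤ (z (m+1) - z m) / M + P (m+1) * (z m - z 0) / M := by linarith
            have h7 : (z (m+1) - z m) / M + P (m+1) * (z m - z 0) / M
                ≤ P (m+1) * (z (m+1) - z 0) / M := by
              rw [← add_div, div_le_div_iff_of_pos_right hMpos]
              nlinarith [mul_nonneg (sub_nonneg.mpr hP1') (sub_nonneg.mpr hz1)]
            linarith
          calc PW1.alphaJ ta (m+1) * PW1.sigmaJ tc (m+1) * PW1.gammaJ a c (m+1)
                * (PW1.Ival ta tc (m+1) + PW1.Aseq ta tc a c (m+1))
              ≤ PW1.alphaJ ta (m+1) * PW1.sigmaJ tc (m+1) * PW1.gammaJ a c (m+1)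
                * (P (m+1) * (z (m+1) - z 0) / M) :=
                mul_le_mul_of_nonneg_left key (by nlinarith)
            _ = P (m+1) * (PW1.alphaJ ta (m+1) * PW1.sigmaJ tc (m+1)
                * PW1.gammaJ a c (m+1)) * (z (m+1) - z 0) / M := by ring
  -- conclusion
  obtain ⟨hA0, hAle⟩ := hA N hN le_rfl
  have hzNm : z (N-1) ≤ z N := hzle N hN le_rfl
  have hend : z N ∈ Set.Icc (z (N-1)) (z N) := ⟨hzNm, le_refl _⟩
  obtain ⟨ha1, ha2⟩ := hta_bd N hN le_rfl (z N) hend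
  obtain ⟨hc1, hc2⟩ := htc_bd N hN le_rfl (z N) hend
  have hI0 := hIval_nonneg N hN le_rfl
  have hIle := hIval_le N hN le_rfl
  have hfac1 : (0:ℝ) ≤ ta.piece N (z N) * (tc.piece N (z N))^2 := by nlinarith
  have hc3 : (tc.piece N (z N))^2 ≤ cmax^2 := by nlinarith
  have hfac2 : ta.piece N (z N) * (tc.piece N (z N))^2 ≤ amax * cmax^2 :=
    mul_le_mul ha2 hc3 (by positivity) (by linarith)
  have hPN := hP1 N
  have hz0N : z 0 ≤ z (N-1) := hzmono' (N-1) (by omega) 0 (by omega)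
  have hbr : PW1.Ival ta tc N + PW1.Aseq ta tc a c N ≤ P N * (2*L) / M := by
    have h6 : PW1.Ival ta tc N + PW1.Aseq ta tc a c N
        ≤ (z N - z (N-1)) / M + P N * (z (N-1) - z 0) / M := by linarith
    have h7 : (z N - z (N-1)) / M + P N * (z (N-1) - z 0) / M
        ≤ P N * (z N - z 0) / M := by
      rw [← add_div, div_le_div_iff_of_pos_right hMpos]
      nlinarith [mul_nonneg (sub_nonneg.mpr hPN) (sub_nonneg.mpr hzNm)]
    have h8 : z N - z 0 = 2 * L := by rw [hzN, hz0]; ring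
    rw [h8] at h7
    linarith
  have hbr0 : 0 ≤ PW1.Ival ta tc N + PW1.Aseq ta tc a c N := by linarith
  have hq : PW1.qpiece ta tc a c N (z N) =
      ta.piece N (z N) * (tc.piece N (z N))^2 *
        (PW1.Ival ta tc N + PW1.Aseq ta tc a c N) := by
    unfold PW1.qpiece PW1.Ival
    rfl
  have hmain : PW1.qpiece ta tc a c N (z N) ≤ amax * cmax^2 * (P N * (2*L) / M) := by
    rw [hq]
    exact mul_le_mul hfac2 hbr hbr0 (mul_nonneg (by linarith) (by positivity))
  have hPsplit : P N = (∏ l ∈ Finset.Icc 1 (N-1), PW1.alphaJ ta l)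
      * (∏ l ∈ Finset.Icc 1 (N-1), PW1.sigmaJ tc l)
      * (∏ l ∈ Finset.Icc 1 (N-1), PW1.gammaJ a c l) := by
    simp only [hP, Finset.prod_mul_distrib]
  calc PW1.qpiece ta tc a c N (z N) ≤ amax * cmax^2 * (P N * (2*L) / M) := hmain
    _ = 2 * L * (amax * cmax^2 / (amin * cmin^2))
        * (∏ l ∈ Finset.Icc 1 (N-1), PW1.alphaJ ta l)
        * (∏ l ∈ Finset.Icc 1 (N-1), PW1.sigmaJ tc l)
        * (∏ l ∈ Finset.Icc 1 (N-1), PW1.gammaJ a c l) := by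
      rw [hPsplit, hM]; field_simp
end

section
/- Under the coefficient assumptions, the jump quantities satisfy: ∏_{ℓ=1}^{N-1} α_ℓ ≤ exp( Var(a)/a_min ), ∏_{ℓ=1}^{N-1} σ_ℓ ≤ exp( Var(c²)/c_min² ), and ∏_{ℓ=1}^{N-1} γ_ℓ ≤ exp( Var(a)/a_min ) · exp( Var(c²)/c_min² ). -/
open MeasureTheory

section Aux
open MeasureTheory

lemma ratio_le_exp_s6 {x y m : ℝ} (hm : 0 < m) (hy : m ≤ y) :
    max (x / y) 1 ≤ Real.exp (|x - y| / m) := by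
  have hy0 : 0 < y := hm.trans_le hy
  have h0 : (0:ℝ) ≤ |x - y| / m := div_nonneg (abs_nonneg _) hm.le
  rcases le_or_gt x y with h | h
  · have h1 : x / y ≤ 1 := (div_le_one hy0).2 h
    exact max_le (h1.trans (Real.one_le_exp h0)) (Real.one_le_exp h0)
  · have hxy : 0 ≤ x - y := by linarith
    have habs : |x - y| = x - y := abs_of_nonneg hxy
    have h1 : x / y ≤ 1 + (x - y) / m := by
      have h2 : (x - y) / y ≤ (x - y) / m := div_le_div_of_nonneg_left hxy hm hy
      have h3 : x / y = 1 + (x - y) / y := by field_simp; ring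
      linarith
    calc max (x/y) 1 = x / y := max_eq_left ((one_lt_div hy0).2 h).le
      _ ≤ 1 + (x - y)/m := h1
      _ ≤ Real.exp ((x-y)/m) := by linarith [Real.add_one_le_exp ((x-y)/m)]
      _ = Real.exp (|x-y|/m) := by rw [habs]

lemma prod_le_exp_sum (s : Finset ℕ) (f t : ℕ → ℝ) (h0 : ∀ l ∈ s, 0 ≤ f l)
    (h : ∀ l ∈ s, f l ≤ Real.exp (t l)) :
    ∏ l ∈ s, f l ≤ Real.exp (∑ l ∈ s, t l) := by
  rw [Real.exp_sum]; exact Finset.prod_le_prod h0 h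

lemma max_max_le_mul (p q : ℝ) : max (max p q) 1 ≤ max p 1 * max q 1 := by
  have h1 : (1:ℝ) ≤ max p 1 := le_max_right _ _
  have h2 : (1:ℝ) ≤ max q 1 := le_max_right _ _
  have hp : p ≤ max p 1 := le_max_left _ _
  have hq : q ≤ max q 1 := le_max_left _ _
  refine max_le (max_le ?_ ?_) ?_ <;> nlinarith

lemma tilde_limR_eq {N : ℕ} {z : ℕ → ℝ} (hzmono : ∀ j < N, z j < z (j+1))
    (a ta : PW1 N z) (hta : a.IsTilde ta) (l : ℕ) (hlN : l + 1 ≤ N) :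
    ta.limR l = a.limR l := by
  have hle : z l ≤ z (l+1) := (hzmono l (by omega)).le
  have hmem : z l ∈ Set.Icc (z (l+1-1)) (z (l+1)) := by
    simp only [Nat.add_sub_cancel]
    exact ⟨le_refl _, hle⟩
  rcases hta (l+1) (by omega) hlN with ⟨_, hp, _⟩ | ⟨_, hp, _⟩
  · exact hp (z l) hmem
  · simpa [PW1.limR, Nat.add_sub_cancel] using hp (z l) hmem

lemma tilde_limL_bound {N : ℕ} {z : ℕ → ℝ} (hzmono : ∀ j < N, z j < z (j+1))
    (a ta : PW1 N z) (hta : a.IsTilde ta) (l : ℕ) (hl1 : 1 ≤ l) (hlN : l ≤ N) :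
    |ta.limL l - a.limL l| ≤ ∫ s in (z (l-1))..(z l), |a.dpiece l s| := by
  have hle : z (l-1) ≤ z l := by
    have h := (hzmono (l-1) (by omega)).le
    rwa [show l - 1 + 1 = l by omega] at h
  have hint : IntervalIntegrable (a.dpiece l) volume (z (l-1)) (z l) :=
    ((a.contd l hl1 hlN).mono (by rw [Set.uIcc_of_le hle])).intervalIntegrable
  rcases hta l hl1 hlN with ⟨_, hp, _⟩ | ⟨_, hp, _⟩
  · have := hp (z l) ⟨hle, le_refl _⟩
    simp only [PW1.limL, this, sub_self, abs_zero]
    exact intervalIntegral.integral_nonneg hle (fun u _ => abs_nonneg _)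
  · have hftc : ∫ s in (z (l-1))..(z l), a.dpiece l s
        = a.piece l (z l) - a.piece l (z (l-1)) :=
      intervalIntegral.integral_eq_sub_of_hasDerivAt
        (fun x hx => a.smooth l hl1 hlN x (by rwa [Set.uIcc_of_le hle] at hx)) hint
    have h1 : ta.limL l = a.piece l (z (l-1)) := hp (z l) ⟨hle, le_refl _⟩
    calc |ta.limL l - a.limL l| = |∫ s in (z (l-1))..(z l), a.dpiece l s| := by
          rw [hftc, h1, PW1.limL, abs_sub_comm]
      _ ≤ ∫ s in (z (l-1))..(z l), |a.dpiece l s| :=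
          intervalIntegral.abs_integral_le_integral_abs hle

lemma tilde_limL_sq_bound {N : ℕ} {z : ℕ → ℝ} (hzmono : ∀ j < N, z j < z (j+1))
    (c tc : PW1 N z) (htc : c.IsTilde tc) (l : ℕ) (hl1 : 1 ≤ l) (hlN : l ≤ N) :
    |(tc.limL l)^2 - (c.limL l)^2|
      ≤ ∫ s in (z (l-1))..(z l), |2 * c.piece l s * c.dpiece l s| := by
  have hle : z (l-1) ≤ z l := by
    have h := (hzmono (l-1) (by omega)).le
    rwa [show l - 1 + 1 = l by omega] at h
  have hderiv : ∀ x ∈ Set.Icc (z (l-1)) (z l),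
      HasDerivAt (fun y => (c.piece l y)^2) (2 * c.piece l x * c.dpiece l x) x := by
    intro x hx
    have := (c.smooth l hl1 hlN x hx).pow 2
    exact (by simpa [pow_one, mul_comm, mul_assoc, mul_left_comm] using this :
      HasDerivAt (c.piece l ^ 2) (2 * c.piece l x * c.dpiece l x) x)
  have hcontp : ContinuousOn (c.piece l) (Set.Icc (z (l-1)) (z l)) :=
    fun x hx => ((c.smooth l hl1 hlN x hx).continuousAt).continuousWithinAt
  have hint : IntervalIntegrable (fun s => 2 * c.piece l s * c.dpiece l s)
      volume (z (l-1)) (z l) := by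
    apply ContinuousOn.intervalIntegrable
    rw [Set.uIcc_of_le hle]
    exact (continuousOn_const.mul hcontp).mul (c.contd l hl1 hlN)
  rcases htc l hl1 hlN with ⟨_, hp, _⟩ | ⟨_, hp, _⟩
  · have := hp (z l) ⟨hle, le_refl _⟩
    simp only [PW1.limL, this, sub_self, abs_zero]
    exact intervalIntegral.integral_nonneg hle (fun u _ => abs_nonneg _)
  · have hftc : ∫ s in (z (l-1))..(z l), 2 * c.piece l s * c.dpiece l s
        = (c.piece l (z l))^2 - (c.piece l (z (l-1)))^2 :=
      intervalIntegral.integral_eq_sub_of_hasDerivAt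
        (fun x hx => hderiv x (by rwa [Set.uIcc_of_le hle] at hx)) hint
    have h1 : tc.limL l = c.piece l (z (l-1)) := hp (z l) ⟨hle, le_refl _⟩
    calc |(tc.limL l)^2 - (c.limL l)^2|
        = |∫ s in (z (l-1))..(z l), 2 * c.piece l s * c.dpiece l s| := by
          rw [hftc, h1, PW1.limL, abs_sub_comm]
      _ ≤ ∫ s in (z (l-1))..(z l), |2 * c.piece l s * c.dpiece l s| :=
          intervalIntegral.abs_integral_le_integral_abs hle

end Aux

/-- under the coefficient assumptions,
`∏ α_ℓ ≤ exp(Var(a)/a_min)`, `∏ σ_ℓ ≤ exp(Var(c²)/c_min²)` and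
`∏ γ_ℓ ≤ exp(Var(a)/a_min) · exp(Var(c²)/c_min²)`. -/
theorem stmt6 (L : ℝ) (hL : 0 < L) (N : ℕ) (hN : 1 ≤ N) (z : ℕ → ℝ)
    (hz0 : z 0 = -L) (hzN : z N = L) (hzmono : ∀ j < N, z j < z (j+1))
    (amin amax cmin cmax : ℝ) (hamin : 0 < amin) (hamax : amin ≤ amax)
    (hcmin : 0 < cmin) (hcmax : cmin ≤ cmax)
    (a c : PW1 N z)
    (hab : ∀ j, 1 ≤ j → j ≤ N → ∀ x ∈ Set.Icc (z (j-1)) (z j),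
      amin ≤ a.piece j x ∧ a.piece j x ≤ amax)
    (hcb : ∀ j, 1 ≤ j → j ≤ N → ∀ x ∈ Set.Icc (z (j-1)) (z j),
      cmin ≤ c.piece j x ∧ c.piece j x ≤ cmax)
    (hasign : a.OneSigned) (hcsign : c.OneSigned)
    (ta tc : PW1 N z) (hta : a.IsTilde ta) (htc : c.IsTilde tc) :
    (∏ l ∈ Finset.Icc 1 (N-1), PW1.alphaJ ta l) ≤ Real.exp (a.var / amin) ∧
    (∏ l ∈ Finset.Icc 1 (N-1), PW1.sigmaJ tc l) ≤ Real.exp (c.varSq / cmin^2) ∧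
    (∏ l ∈ Finset.Icc 1 (N-1), PW1.gammaJ a c l) ≤
      Real.exp (a.var / amin) * Real.exp (c.varSq / cmin^2) := by
  classical
  -- basic facts about the partition
  have hle : ∀ j, 1 ≤ j → j ≤ N → z (j-1) ≤ z j := by
    intro j hj1 hjN
    have h := (hzmono (j-1) (by omega)).le
    rwa [show j - 1 + 1 = j by omega] at h
  -- nonnegativity of the integral terms
  have hintA : ∀ j ∈ Finset.Icc 1 N, 0 ≤ ∫ s in (z (j-1))..(z j), |a.dpiece j s| := by
    intro j hj
    rw [Finset.mem_Icc] at hj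
    exact intervalIntegral.integral_nonneg (hle j hj.1 hj.2) (fun u _ => abs_nonneg _)
  have hintC : ∀ j ∈ Finset.Icc 1 N,
      0 ≤ ∫ s in (z (j-1))..(z j), |2 * c.piece j s * c.dpiece j s| := by
    intro j hj
    rw [Finset.mem_Icc] at hj
    exact intervalIntegral.integral_nonneg (hle j hj.1 hj.2) (fun u _ => abs_nonneg _)
  -- the per-break-point quantities
  set tA : ℕ → ℝ := fun l => (|a.jump l| + ∫ s in (z (l-1))..(z l), |a.dpiece l s|) / amin
    with htA
  set tC : ℕ → ℝ := fun l =>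
    (|(c.limL l)^2 - (c.limR l)^2| + ∫ s in (z (l-1))..(z l), |2 * c.piece l s * c.dpiece l s|)
      / cmin^2 with htC
  -- sums of tA, tC are bounded by the variations
  have hsumA : ∑ l ∈ Finset.Icc 1 (N-1), tA l ≤ a.var / amin := by
    have h : ∑ l ∈ Finset.Icc 1 (N-1),
        (|a.jump l| + ∫ s in (z (l-1))..(z l), |a.dpiece l s|) ≤ a.var := by
      rw [Finset.sum_add_distrib, PW1.var]
      exact add_le_add le_rfl (Finset.sum_le_sum_of_subset_of_nonneg
        (Finset.Icc_subset_Icc_right (Nat.sub_le N 1)) (fun j hj _ => hintA j hj))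
    rw [htA, ← Finset.sum_div]
    exact div_le_div_of_nonneg_right h hamin.le
  have hsumC : ∑ l ∈ Finset.Icc 1 (N-1), tC l ≤ c.varSq / cmin^2 := by
    have h : ∑ l ∈ Finset.Icc 1 (N-1),
        (|(c.limL l)^2 - (c.limR l)^2|
          + ∫ s in (z (l-1))..(z l), |2 * c.piece l s * c.dpiece l s|) ≤ c.varSq := by
      rw [Finset.sum_add_distrib, PW1.varSq]
      exact add_le_add le_rfl (Finset.sum_le_sum_of_subset_of_nonneg
        (Finset.Icc_subset_Icc_right (Nat.sub_le N 1)) (fun j hj _ => hintC j hj))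
    rw [htC, ← Finset.sum_div]
    exact div_le_div_of_nonneg_right h (pow_pos hcmin 2).le
  -- membership facts
  have hmemL : ∀ l, 1 ≤ l → l ≤ N → z l ∈ Set.Icc (z (l-1)) (z l) :=
    fun l h1 h2 => ⟨hle l h1 h2, le_refl _⟩
  have hmemR : ∀ l, l + 1 ≤ N → z l ∈ Set.Icc (z (l+1-1)) (z (l+1)) := by
    intro l hl
    simp only [Nat.add_sub_cancel]
    exact ⟨le_refl _, (hzmono l (by omega)).le⟩
  -- lower bounds on one-sided limits
  have haL : ∀ l, 1 ≤ l → l ≤ N → amin ≤ a.limL l :=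
    fun l h1 h2 => (hab l h1 h2 (z l) (hmemL l h1 h2)).1
  have haR : ∀ l, 1 ≤ l → l + 1 ≤ N → amin ≤ a.limR l :=
    fun l h1 h2 => (hab (l+1) (by omega) h2 (z l) (hmemR l h2)).1
  have hcL : ∀ l, 1 ≤ l → l ≤ N → cmin ≤ c.limL l :=
    fun l h1 h2 => (hcb l h1 h2 (z l) (hmemL l h1 h2)).1
  have hcR : ∀ l, 1 ≤ l → l + 1 ≤ N → cmin ≤ c.limR l :=
    fun l h1 h2 => (hcb (l+1) (by omega) h2 (z l) (hmemR l h2)).1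
  have hcmin2 : (0:ℝ) < cmin^2 := pow_pos hcmin 2
  -- per-term exponential bounds
  have hA1 : ∀ l ∈ Finset.Icc 1 (N-1), PW1.alphaJ ta l ≤ Real.exp (tA l) := by
    intro l hl
    rw [Finset.mem_Icc] at hl
    obtain ⟨hl1, hl2⟩ := hl
    have hlN : l + 1 ≤ N := by omega
    have hR : ta.limR l = a.limR l := tilde_limR_eq hzmono a ta hta l hlN
    have key : |ta.limL l - ta.limR l|
        ≤ |a.jump l| + ∫ s in (z (l-1))..(z l), |a.dpiece l s| := by
      rw [hR]
      calc |ta.limL l - a.limR l|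
          ≤ |ta.limL l - a.limL l| + |a.limL l - a.limR l| := abs_sub_le _ _ _
        _ ≤ (∫ s in (z (l-1))..(z l), |a.dpiece l s|) + |a.jump l| := by
            exact add_le_add (tilde_limL_bound hzmono a ta hta l hl1 (by omega)) (le_refl _)
        _ = |a.jump l| + ∫ s in (z (l-1))..(z l), |a.dpiece l s| := add_comm _ _
    calc PW1.alphaJ ta l ≤ Real.exp (|ta.limL l - ta.limR l| / amin) :=
          ratio_le_exp_s6 hamin (hR ▸ haR l hl1 hlN)
      _ ≤ Real.exp (tA l) := by
          apply Real.exp_le_exp.2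
          exact div_le_div_of_nonneg_right key hamin.le
  have hA2 : ∀ l ∈ Finset.Icc 1 (N-1), max (a.limR l / a.limL l) 1 ≤ Real.exp (tA l) := by
    intro l hl
    rw [Finset.mem_Icc] at hl
    obtain ⟨hl1, hl2⟩ := hl
    calc max (a.limR l / a.limL l) 1
        ≤ Real.exp (|a.limR l - a.limL l| / amin) :=
          ratio_le_exp_s6 hamin (haL l hl1 (by omega))
      _ ≤ Real.exp (tA l) := by
          apply Real.exp_le_exp.2
          apply div_le_div_of_nonneg_right ?_ hamin.le
          rw [abs_sub_comm]
          exact le_add_of_le_of_nonneg (le_refl _)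
            (hintA l (Finset.mem_Icc.2 ⟨hl1, by omega⟩))
  have hC1 : ∀ l ∈ Finset.Icc 1 (N-1), PW1.sigmaJ tc l ≤ Real.exp (tC l) := by
    intro l hl
    rw [Finset.mem_Icc] at hl
    obtain ⟨hl1, hl2⟩ := hl
    have hlN : l + 1 ≤ N := by omega
    have hR : tc.limR l = c.limR l := tilde_limR_eq hzmono c tc htc l hlN
    have hy : cmin^2 ≤ (tc.limR l)^2 := by
      rw [hR]
      exact pow_le_pow_left₀ hcmin.le (hcR l hl1 hlN) 2
    have key : |(tc.limL l)^2 - (tc.limR l)^2|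
        ≤ |(c.limL l)^2 - (c.limR l)^2|
          + ∫ s in (z (l-1))..(z l), |2 * c.piece l s * c.dpiece l s| := by
      rw [hR]
      calc |(tc.limL l)^2 - (c.limR l)^2|
          ≤ |(tc.limL l)^2 - (c.limL l)^2| + |(c.limL l)^2 - (c.limR l)^2| := abs_sub_le _ _ _
        _ ≤ (∫ s in (z (l-1))..(z l), |2 * c.piece l s * c.dpiece l s|)
              + |(c.limL l)^2 - (c.limR l)^2| :=
            add_le_add (tilde_limL_sq_bound hzmono c tc htc l hl1 (by omega)) (le_refl _)
        _ = _ := add_comm _ _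
    calc PW1.sigmaJ tc l
        ≤ Real.exp (|(tc.limL l)^2 - (tc.limR l)^2| / cmin^2) := ratio_le_exp_s6 hcmin2 hy
      _ ≤ Real.exp (tC l) := by
          apply Real.exp_le_exp.2
          exact div_le_div_of_nonneg_right key hcmin2.le
  have hC2 : ∀ l ∈ Finset.Icc 1 (N-1),
      max ((c.limR l)^2 / (c.limL l)^2) 1 ≤ Real.exp (tC l) := by
    intro l hl
    rw [Finset.mem_Icc] at hl
    obtain ⟨hl1, hl2⟩ := hl
    have hy : cmin^2 ≤ (c.limL l)^2 := pow_le_pow_left₀ hcmin.le (hcL l hl1 (by omega)) 2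
    calc max ((c.limR l)^2 / (c.limL l)^2) 1
        ≤ Real.exp (|(c.limR l)^2 - (c.limL l)^2| / cmin^2) := ratio_le_exp_s6 hcmin2 hy
      _ ≤ Real.exp (tC l) := by
          apply Real.exp_le_exp.2
          apply div_le_div_of_nonneg_right ?_ hcmin2.le
          rw [abs_sub_comm]
          exact le_add_of_le_of_nonneg (le_refl _)
            (hintC l (Finset.mem_Icc.2 ⟨hl1, by omega⟩))
  -- assemble the three claims
  have claimA : (∏ l ∈ Finset.Icc 1 (N-1), PW1.alphaJ ta l) ≤ Real.exp (a.var / amin) := by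
    calc ∏ l ∈ Finset.Icc 1 (N-1), PW1.alphaJ ta l
        ≤ Real.exp (∑ l ∈ Finset.Icc 1 (N-1), tA l) :=
          prod_le_exp_sum _ _ _
            (fun l _ => le_trans zero_le_one (le_max_right _ _)) hA1
      _ ≤ Real.exp (a.var / amin) := Real.exp_le_exp.2 hsumA
  have claimC : (∏ l ∈ Finset.Icc 1 (N-1), PW1.sigmaJ tc l)
      ≤ Real.exp (c.varSq / cmin^2) := by
    calc ∏ l ∈ Finset.Icc 1 (N-1), PW1.sigmaJ tc l
        ≤ Real.exp (∑ l ∈ Finset.Icc 1 (N-1), tC l) :=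
          prod_le_exp_sum _ _ _
            (fun l _ => le_trans zero_le_one (le_max_right _ _)) hC1
      _ ≤ Real.exp (c.varSq / cmin^2) := Real.exp_le_exp.2 hsumC
  refine ⟨claimA, claimC, ?_⟩
  have prodA : (∏ l ∈ Finset.Icc 1 (N-1), max (a.limR l / a.limL l) 1)
      ≤ Real.exp (a.var / amin) :=
    le_trans (prod_le_exp_sum _ _ _
      (fun l _ => le_trans zero_le_one (le_max_right _ _)) hA2) (Real.exp_le_exp.2 hsumA)
  have prodC : (∏ l ∈ Finset.Icc 1 (N-1), max ((c.limR l)^2 / (c.limL l)^2) 1)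
      ≤ Real.exp (c.varSq / cmin^2) :=
    le_trans (prod_le_exp_sum _ _ _
      (fun l _ => le_trans zero_le_one (le_max_right _ _)) hC2) (Real.exp_le_exp.2 hsumC)
  calc ∏ l ∈ Finset.Icc 1 (N-1), PW1.gammaJ a c l
      ≤ ∏ l ∈ Finset.Icc 1 (N-1),
          (max (a.limR l / a.limL l) 1 * max ((c.limR l)^2 / (c.limL l)^2) 1) :=
        Finset.prod_le_prod (fun l _ => le_trans zero_le_one (le_max_right _ _))
          (fun l _ => max_max_le_mul _ _)
    _ = (∏ l ∈ Finset.Icc 1 (N-1), max (a.limR l / a.limL l) 1)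
          * ∏ l ∈ Finset.Icc 1 (N-1), max ((c.limR l)^2 / (c.limL l)^2) 1 :=
        Finset.prod_mul_distrib
    _ ≤ Real.exp (a.var / amin) * Real.exp (c.varSq / cmin^2) :=
        mul_le_mul prodA prodC
          (Finset.prod_nonneg (fun l _ => le_trans zero_le_one (le_max_right _ _)))
          (Real.exp_nonneg _)
end

section
/- Under the coefficient assumptions, the function q satisfies 0 ≤ q(x) ≤ 2L · (a_max c_max²)/(a_min c_min²) · exp( (2/a_min) Var(a) + (2/c_min²) Var(c²) ) for all x ∈ [-L, L]. -/
open MeasureTheory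

private lemma PW1.Aseq_succ' {N : ℕ} {z : ℕ → ℝ} (ta tc a c : PW1 N z) (k : ℕ) (hk : 1 ≤ k) :
    PW1.Aseq ta tc a c (k+1) = PW1.alphaJ ta k * PW1.sigmaJ tc k * PW1.gammaJ a c k
      * (PW1.Ival ta tc k + PW1.Aseq ta tc a c k) := by
  cases k with
  | zero => omega
  | succ i => rfl

set_option maxHeartbeats 1000000 in
/-- under the coefficient assumptions, the function `q` satisfies
`0 ≤ q(x) ≤ 2L (a_max c_max²)/(a_min c_min²) exp( (2/a_min) Var(a) + (2/c_min²) Var(c²) )`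
for all `x ∈ [-L, L]` (i.e. for every piece on its closed subinterval). -/
theorem stmt7 (L : ℝ) (hL : 0 < L) (N : ℕ) (hN : 1 ≤ N) (z : ℕ → ℝ)
    (hz0 : z 0 = -L) (hzN : z N = L) (hzmono : ∀ j < N, z j < z (j+1))
    (amin amax cmin cmax : ℝ) (hamin : 0 < amin) (hamax : amin ≤ amax)
    (hcmin : 0 < cmin) (hcmax : cmin ≤ cmax)
    (a c : PW1 N z)
    (hab : ∀ j, 1 ≤ j → j ≤ N → ∀ x ∈ Set.Icc (z (j-1)) (z j),
      amin ≤ a.piece j x ∧ a.piece j x ≤ amax)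
    (hcb : ∀ j, 1 ≤ j → j ≤ N → ∀ x ∈ Set.Icc (z (j-1)) (z j),
      cmin ≤ c.piece j x ∧ c.piece j x ≤ cmax)
    (hasign : a.OneSigned) (hcsign : c.OneSigned)
    (ta tc : PW1 N z) (hta : a.IsTilde ta) (htc : c.IsTilde tc) :
    ∀ j, 1 ≤ j → j ≤ N → ∀ x ∈ Set.Icc (z (j-1)) (z j),
      0 ≤ PW1.qpiece ta tc a c j x ∧
      PW1.qpiece ta tc a c j x ≤
        2 * L * (amax * cmax^2 / (amin * cmin^2))
          * Real.exp ((2 / amin) * a.var + (2 / cmin^2) * c.varSq) := by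
  classical
  -- monotonicity of the partition
  have hzle : ∀ i k : ℕ, i ≤ k → k ≤ N → z i ≤ z k := by
    intro i k hik hkN
    induction k with
    | zero =>
      have : i = 0 := by omega
      simp [this]
    | succ n ih =>
      rcases Nat.lt_or_ge i (n+1) with h | h
      · exact le_trans (ih (by omega) (by omega)) (le_of_lt (hzmono n (by omega)))
      · have : i = n + 1 := by omega
        simp [this]
  set m : ℝ := amin * cmin ^ 2 with hmdef
  have hm : 0 < m := by positivity
  -- continuity of pieces
  have hcont : ∀ (g : PW1 N z) j, 1 ≤ j → j ≤ N →
      ContinuousOn (g.piece j) (Set.Icc (z (j-1)) (z j)) := by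
    intro g j h1 h2 x hx
    exact (g.smooth j h1 h2 x hx).continuousAt.continuousWithinAt
  -- bounds for the tilde coefficients
  have htabound : ∀ j, 1 ≤ j → j ≤ N → ∀ x ∈ Set.Icc (z (j-1)) (z j),
      amin ≤ ta.piece j x ∧ ta.piece j x ≤ amax := by
    intro j h1 h2 x hx
    have hz1 : z (j-1) ∈ Set.Icc (z (j-1)) (z j) := ⟨le_refl _, hzle _ _ (by omega) h2⟩
    rcases hta j h1 h2 with ⟨_, hpe, _⟩ | ⟨_, hpe, _⟩
    · rw [hpe x hx]; exact hab j h1 h2 x hx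
    · rw [hpe x hx]; exact hab j h1 h2 _ hz1
  have htcbound : ∀ j, 1 ≤ j → j ≤ N → ∀ x ∈ Set.Icc (z (j-1)) (z j),
      cmin ≤ tc.piece j x ∧ tc.piece j x ≤ cmax := by
    intro j h1 h2 x hx
    have hz1 : z (j-1) ∈ Set.Icc (z (j-1)) (z j) := ⟨le_refl _, hzle _ _ (by omega) h2⟩
    rcases htc j h1 h2 with ⟨_, hpe, _⟩ | ⟨_, hpe, _⟩
    · rw [hpe x hx]; exact hcb j h1 h2 x hx
    · rw [hpe x hx]; exact hcb j h1 h2 _ hz1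
  -- denominator bounds
  have hdenom : ∀ j, 1 ≤ j → j ≤ N → ∀ x ∈ Set.Icc (z (j-1)) (z j),
      m ≤ ta.piece j x * (tc.piece j x) ^ 2 ∧
      ta.piece j x * (tc.piece j x) ^ 2 ≤ amax * cmax ^ 2 := by
    intro j h1 h2 x hx
    obtain ⟨ha1, ha2⟩ := htabound j h1 h2 x hx
    obtain ⟨hc1, hc2⟩ := htcbound j h1 h2 x hx
    have hcsq1 : cmin ^ 2 ≤ (tc.piece j x) ^ 2 := by nlinarith
    have hcsq2 : (tc.piece j x) ^ 2 ≤ cmax ^ 2 := by nlinarith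
    constructor
    · rw [hmdef]
      exact mul_le_mul ha1 hcsq1 (by positivity) (by linarith)
    · exact mul_le_mul ha2 hcsq2 (by positivity) (by linarith)
  -- bounds for the partial integrals J
  have hJ : ∀ j, 1 ≤ j → j ≤ N → ∀ x ∈ Set.Icc (z (j-1)) (z j),
      0 ≤ (∫ s in (z (j-1))..x, 1 / (ta.piece j s * (tc.piece j s) ^ 2)) ∧
      (∫ s in (z (j-1))..x, 1 / (ta.piece j s * (tc.piece j s) ^ 2)) ≤ (x - z (j-1)) / m := by
    intro j h1 h2 x hx
    have hsub : Set.Icc (z (j-1)) x ⊆ Set.Icc (z (j-1)) (z j) := Set.Icc_subset_Icc le_rfl hx.2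
    have hcg : ContinuousOn (fun s => 1 / (ta.piece j s * (tc.piece j s) ^ 2))
        (Set.Icc (z (j-1)) x) := by
      apply ContinuousOn.div continuousOn_const
      · exact (((hcont ta j h1 h2).mono hsub).mul (((hcont tc j h1 h2).mono hsub).pow 2))
      · intro s hs
        have := (hdenom j h1 h2 s (hsub hs)).1
        nlinarith
    have hint : IntervalIntegrable (fun s => 1 / (ta.piece j s * (tc.piece j s) ^ 2))
        MeasureTheory.volume (z (j-1)) x := hcg.intervalIntegrable_of_Icc hx.1
    constructor
    · apply intervalIntegral.integral_nonneg hx.1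
      intro s hs
      have h0 : (0:ℝ) < ta.piece j s * (tc.piece j s) ^ 2 :=
        lt_of_lt_of_le hm (hdenom j h1 h2 s (hsub hs)).1
      positivity
    · have hmono : (∫ s in (z (j-1))..x, 1 / (ta.piece j s * (tc.piece j s) ^ 2))
          ≤ ∫ _s in (z (j-1))..x, (1:ℝ) / m := by
        apply intervalIntegral.integral_mono_on hx.1 hint intervalIntegrable_const
        intro s hs
        exact one_div_le_one_div_of_le hm (hdenom j h1 h2 s (hsub hs)).1
      calc (∫ s in (z (j-1))..x, 1 / (ta.piece j s * (tc.piece j s) ^ 2))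
          ≤ ∫ _s in (z (j-1))..x, (1:ℝ) / m := hmono
        _ = (x - z (j-1)) / m := by
            simp [intervalIntegral.integral_const, smul_eq_mul, div_eq_mul_inv]
  -- FTC for a
  have hFTCa : ∀ j, 1 ≤ j → j ≤ N →
      a.piece j (z j) - a.piece j (z (j-1)) = ∫ s in (z (j-1))..(z j), a.dpiece j s := by
    intro j h1 h2
    have hle : z (j-1) ≤ z j := hzle _ _ (by omega) h2
    refine (intervalIntegral.integral_eq_sub_of_hasDerivAt (fun x hx => a.smooth j h1 h2 x ?_)
      (((a.contd j h1 h2)).intervalIntegrable_of_Icc hle)).symm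
    rwa [Set.uIcc_of_le hle] at hx
  -- FTC for c^2
  have hFTCc2 : ∀ j, 1 ≤ j → j ≤ N →
      (c.piece j (z j)) ^ 2 - (c.piece j (z (j-1))) ^ 2
        = ∫ s in (z (j-1))..(z j), 2 * c.piece j s * c.dpiece j s := by
    intro j h1 h2
    have hle : z (j-1) ≤ z j := hzle _ _ (by omega) h2
    have hder : ∀ x ∈ Set.uIcc (z (j-1)) (z j),
        HasDerivAt (fun y => (c.piece j y) ^ 2) (2 * c.piece j x * c.dpiece j x) x := by
      intro x hx
      rw [Set.uIcc_of_le hle] at hx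
      have h := (c.smooth j h1 h2 x hx).pow 2
      norm_num at h
      exact h
    have hintc : IntervalIntegrable (fun s => 2 * c.piece j s * c.dpiece j s)
        MeasureTheory.volume (z (j-1)) (z j) :=
      ((continuousOn_const.mul (hcont c j h1 h2)).mul (c.contd j h1 h2)).intervalIntegrable_of_Icc hle
    exact (intervalIntegral.integral_eq_sub_of_hasDerivAt hder hintc).symm
  -- variation integrals
  set Va : ℕ → ℝ := fun j => ∫ s in (z (j-1))..(z j), |a.dpiece j s| with hVadef
  set Wc : ℕ → ℝ := fun j => ∫ s in (z (j-1))..(z j), |2 * c.piece j s * c.dpiece j s| with hWcdef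
  have hVa0 : ∀ j, 1 ≤ j → j ≤ N → 0 ≤ Va j := by
    intro j h1 h2
    exact intervalIntegral.integral_nonneg (hzle _ _ (by omega) h2) (fun s _ => abs_nonneg _)
  have hWc0 : ∀ j, 1 ≤ j → j ≤ N → 0 ≤ Wc j := by
    intro j h1 h2
    exact intervalIntegral.integral_nonneg (hzle _ _ (by omega) h2) (fun s _ => abs_nonneg _)
  have hVaInt : ∀ j, 1 ≤ j → j ≤ N →
      IntervalIntegrable (a.dpiece j) MeasureTheory.volume (z (j-1)) (z j) := by
    intro j h1 h2
    exact (a.contd j h1 h2).intervalIntegrable_of_Icc (hzle _ _ (by omega) h2)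
  have hVaIntAbs : ∀ j, 1 ≤ j → j ≤ N →
      IntervalIntegrable (fun s => |a.dpiece j s|) MeasureTheory.volume (z (j-1)) (z j) := by
    intro j h1 h2
    exact ((a.contd j h1 h2).abs).intervalIntegrable_of_Icc (hzle _ _ (by omega) h2)
  -- key: |∫ a'| ≤ Va
  have hVarBda : ∀ j, 1 ≤ j → j ≤ N →
      |a.piece j (z j) - a.piece j (z (j-1))| ≤ Va j := by
    intro j h1 h2
    rw [hFTCa j h1 h2]
    exact intervalIntegral.abs_integral_le_integral_abs (hzle _ _ (by omega) h2)
  have hVarBdc : ∀ j, 1 ≤ j → j ≤ N →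
      |(c.piece j (z j)) ^ 2 - (c.piece j (z (j-1))) ^ 2| ≤ Wc j := by
    intro j h1 h2
    rw [hFTCc2 j h1 h2]
    exact intervalIntegral.abs_integral_le_integral_abs (hzle _ _ (by omega) h2)
  -- right limit of the tilde functions
  have htaR : ∀ j, 1 ≤ j → j + 1 ≤ N → ta.limR j = a.limR j := by
    intro j h1 h2
    have hmem : z j ∈ Set.Icc (z ((j+1)-1)) (z (j+1)) := by
      simp only [Nat.add_sub_cancel]
      exact ⟨le_refl _, hzle j (j+1) (by omega) h2⟩
    rcases hta (j+1) (by omega) h2 with ⟨_, hpe, _⟩ | ⟨_, hpe, _⟩ <;>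
      simp [PW1.limR, hpe (z j) hmem, Nat.add_sub_cancel]
  have htcR : ∀ j, 1 ≤ j → j + 1 ≤ N → tc.limR j = c.limR j := by
    intro j h1 h2
    have hmem : z j ∈ Set.Icc (z ((j+1)-1)) (z (j+1)) := by
      simp only [Nat.add_sub_cancel]
      exact ⟨le_refl _, hzle j (j+1) (by omega) h2⟩
    rcases htc (j+1) (by omega) h2 with ⟨_, hpe, _⟩ | ⟨_, hpe, _⟩ <;>
      simp [PW1.limR, hpe (z j) hmem, Nat.add_sub_cancel]
  -- left limit bound for tilde a
  have htaL : ∀ j, 1 ≤ j → j ≤ N → ta.limL j ≤ a.piece j (z (j-1)) + Va j := by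
    intro j h1 h2
    have hle : z (j-1) ≤ z j := hzle _ _ (by omega) h2
    have hmem : z j ∈ Set.Icc (z (j-1)) (z j) := ⟨hle, le_refl _⟩
    have hbd := hVarBda j h1 h2
    rcases hta j h1 h2 with ⟨_, hpe, _⟩ | ⟨_, hpe, _⟩
    · simp only [PW1.limL, hpe (z j) hmem]
      have := abs_le.mp hbd
      linarith [this.2]
    · simp only [PW1.limL, hpe (z j) hmem]
      linarith [hVa0 j h1 h2]
  have htcL : ∀ j, 1 ≤ j → j ≤ N → (tc.limL j) ^ 2 ≤ (c.piece j (z (j-1))) ^ 2 + Wc j := by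
    intro j h1 h2
    have hle : z (j-1) ≤ z j := hzle _ _ (by omega) h2
    have hmem : z j ∈ Set.Icc (z (j-1)) (z j) := ⟨hle, le_refl _⟩
    have hbd := hVarBdc j h1 h2
    rcases htc j h1 h2 with ⟨_, hpe, _⟩ | ⟨_, hpe, _⟩
    · simp only [PW1.limL, hpe (z j) hmem]
      have := abs_le.mp hbd
      linarith [this.2]
    · simp only [PW1.limL, hpe (z j) hmem]
      linarith [hWc0 j h1 h2]
  -- reverse bounds
  have haRev : ∀ j, 1 ≤ j → j ≤ N → a.piece j (z (j-1)) ≤ a.limL j + Va j := by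
    intro j h1 h2
    have := abs_le.mp (hVarBda j h1 h2)
    simp only [PW1.limL]
    linarith [this.1]
  have hcRev : ∀ j, 1 ≤ j → j ≤ N → (c.piece j (z (j-1))) ^ 2 ≤ (c.limL j) ^ 2 + Wc j := by
    intro j h1 h2
    have := abs_le.mp (hVarBdc j h1 h2)
    simp only [PW1.limL]
    linarith [this.1]
  -- limits are within coefficient bounds
  have haLlim : ∀ j, 1 ≤ j → j ≤ N → amin ≤ a.limL j :=
    fun j h1 h2 => (hab j h1 h2 (z j) ⟨hzle _ _ (by omega) h2, le_refl _⟩).1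
  have haRlim : ∀ j, 1 ≤ j → j + 1 ≤ N → amin ≤ a.limR j := by
    intro j h1 h2
    have hmem : z j ∈ Set.Icc (z ((j+1)-1)) (z (j+1)) := by
      simp only [Nat.add_sub_cancel]
      exact ⟨le_refl _, hzle j (j+1) (by omega) h2⟩
    exact (hab (j+1) (by omega) h2 (z j) hmem).1
  have hcLlim : ∀ j, 1 ≤ j → j ≤ N → cmin ≤ c.limL j :=
    fun j h1 h2 => (hcb j h1 h2 (z j) ⟨hzle _ _ (by omega) h2, le_refl _⟩).1
  have hcRlim : ∀ j, 1 ≤ j → j + 1 ≤ N → cmin ≤ c.limR j := by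
    intro j h1 h2
    have hmem : z j ∈ Set.Icc (z ((j+1)-1)) (z (j+1)) := by
      simp only [Nat.add_sub_cancel]
      exact ⟨le_refl _, hzle j (j+1) (by omega) h2⟩
    exact (hcb (j+1) (by omega) h2 (z j) hmem).1
  -- the exponent d
  set d : ℕ → ℝ := fun j => 2 / amin * (|a.jump j| + Va j)
      + 2 / cmin ^ 2 * (|(c.limL j) ^ 2 - (c.limR j) ^ 2| + Wc j) with hddef
  have hd0 : ∀ j, 1 ≤ j → j ≤ N → 0 ≤ d j := by
    intro j h1 h2
    have := hVa0 j h1 h2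
    have := hWc0 j h1 h2
    have h1' : (0:ℝ) ≤ |a.jump j| := abs_nonneg _
    have h2' : (0:ℝ) ≤ |(c.limL j) ^ 2 - (c.limR j) ^ 2| := abs_nonneg _
    have e1 : (0:ℝ) ≤ 2 / amin := by positivity
    have e2 : (0:ℝ) ≤ 2 / cmin ^ 2 := by positivity
    simp only [hddef]
    nlinarith
  -- bound on the product α σ γ
  have hmu : ∀ j, 1 ≤ j → j + 1 ≤ N →
      1 ≤ PW1.alphaJ ta j * PW1.sigmaJ tc j * PW1.gammaJ a c j ∧
      PW1.alphaJ ta j * PW1.sigmaJ tc j * PW1.gammaJ a c j ≤ Real.exp (d j) := by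
    intro j h1 h2
    have hjN : j ≤ N := by omega
    have hα1 : (1:ℝ) ≤ PW1.alphaJ ta j := le_max_right _ _
    have hσ1 : (1:ℝ) ≤ PW1.sigmaJ tc j := le_max_right _ _
    have hγ1 : (1:ℝ) ≤ PW1.gammaJ a c j := le_max_right _ _
    have h0alpha : (0:ℝ) ≤ PW1.alphaJ ta j := by linarith
    have h0sigma : (0:ℝ) ≤ PW1.sigmaJ tc j := by linarith
    constructor
    · have hp : (1:ℝ)*1 ≤ PW1.alphaJ ta j * PW1.sigmaJ tc j :=
        mul_le_mul hα1 hσ1 zero_le_one h0alpha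
      have hp2 : (1:ℝ)*1 ≤ (PW1.alphaJ ta j * PW1.sigmaJ tc j) * PW1.gammaJ a c j :=
        mul_le_mul (by linarith) hγ1 zero_le_one (mul_nonneg h0alpha h0sigma)
      linarith
    · -- individual bounds
      have hjumpa : (0:ℝ) ≤ |a.jump j| := abs_nonneg _
      have hsq : (0:ℝ) ≤ |(c.limL j) ^ 2 - (c.limR j) ^ 2| := abs_nonneg _
      have hVaj := hVa0 j h1 hjN
      have hWcj := hWc0 j h1 hjN
      have haR := haRlim j h1 h2
      have hcR := hcRlim j h1 h2
      have haL := haLlim j h1 hjN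
      have hcL := hcLlim j h1 hjN
      have hcR2 : cmin ^ 2 ≤ (c.limR j) ^ 2 := pow_le_pow_left₀ hcmin.le hcR 2
      have hcL2 : cmin ^ 2 ≤ (c.limL j) ^ 2 := pow_le_pow_left₀ hcmin.le hcL 2
      -- alpha
      have hαle : PW1.alphaJ ta j ≤ 1 + (|a.jump j| + 2 * Va j) / amin := by
        apply max_le _ (by
          have : (0:ℝ) ≤ (|a.jump j| + 2 * Va j) / amin := div_nonneg (by linarith) hamin.le
          linarith)
        rw [htaR j h1 h2]
        have hnum : ta.limL j ≤ a.limR j + (|a.jump j| + 2 * Va j) := by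
          have s1 := htaL j h1 hjN
          have s2 := haRev j h1 hjN
          have s3 : a.limL j ≤ a.limR j + |a.jump j| := by
            have : a.jump j = a.limL j - a.limR j := rfl
            have := le_abs_self (a.jump j)
            linarith
          linarith
        calc ta.limL j / a.limR j ≤ (a.limR j + (|a.jump j| + 2 * Va j)) / a.limR j := by
              gcongr
              linarith
          _ ≤ 1 + (|a.jump j| + 2 * Va j) / amin := by
              rw [add_div, div_self (by linarith : a.limR j ≠ 0)]
              have : (|a.jump j| + 2 * Va j) / a.limR j ≤ (|a.jump j| + 2 * Va j) / amin := by
                gcongr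
              linarith
      -- sigma
      have hσle : PW1.sigmaJ tc j
          ≤ 1 + (|(c.limL j) ^ 2 - (c.limR j) ^ 2| + 2 * Wc j) / cmin ^ 2 := by
        apply max_le _ (by
          have : (0:ℝ) ≤ (|(c.limL j) ^ 2 - (c.limR j) ^ 2| + 2 * Wc j) / cmin ^ 2 :=
            div_nonneg (by linarith) (by positivity)
          linarith)
        rw [htcR j h1 h2]
        have hcRpos : (0:ℝ) < (c.limR j) ^ 2 := pow_pos (lt_of_lt_of_le hcmin hcR) 2
        have hnum : (tc.limL j) ^ 2
            ≤ (c.limR j) ^ 2 + (|(c.limL j) ^ 2 - (c.limR j) ^ 2| + 2 * Wc j) := by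
          have s1 := htcL j h1 hjN
          have s2 := hcRev j h1 hjN
          have s3 : (c.limL j) ^ 2 ≤ (c.limR j) ^ 2 + |(c.limL j) ^ 2 - (c.limR j) ^ 2| := by
            have := le_abs_self ((c.limL j) ^ 2 - (c.limR j) ^ 2)
            linarith
          linarith
        calc (tc.limL j) ^ 2 / (c.limR j) ^ 2
            ≤ ((c.limR j) ^ 2 + (|(c.limL j) ^ 2 - (c.limR j) ^ 2| + 2 * Wc j)) / (c.limR j) ^ 2 := by
              gcongr <;> linarith
          _ ≤ 1 + (|(c.limL j) ^ 2 - (c.limR j) ^ 2| + 2 * Wc j) / cmin ^ 2 := by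
              rw [add_div, div_self (ne_of_gt hcRpos)]
              have : (|(c.limL j) ^ 2 - (c.limR j) ^ 2| + 2 * Wc j) / (c.limR j) ^ 2
                  ≤ (|(c.limL j) ^ 2 - (c.limR j) ^ 2| + 2 * Wc j) / cmin ^ 2 := by
                gcongr <;> linarith
              linarith
      -- gamma
      have hγle : PW1.gammaJ a c j
          ≤ 1 + (|a.jump j| / amin + |(c.limL j) ^ 2 - (c.limR j) ^ 2| / cmin ^ 2) := by
        have hp1 : (0:ℝ) ≤ |a.jump j| / amin := div_nonneg (by linarith) hamin.le
        have hp2 : (0:ℝ) ≤ |(c.limL j) ^ 2 - (c.limR j) ^ 2| / cmin ^ 2 :=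
          div_nonneg (by linarith) (by positivity)
        apply max_le (max_le _ _) (by linarith)
        · have hnum : a.limR j ≤ a.limL j + |a.jump j| := by
            have hj : a.jump j = a.limL j - a.limR j := rfl
            have := neg_abs_le (a.jump j)
            linarith
          calc a.limR j / a.limL j ≤ (a.limL j + |a.jump j|) / a.limL j := by
                gcongr
                linarith
            _ ≤ 1 + (|a.jump j| / amin + |(c.limL j) ^ 2 - (c.limR j) ^ 2| / cmin ^ 2) := by
                rw [add_div, div_self (by linarith : a.limL j ≠ 0)]
                have : |a.jump j| / a.limL j ≤ |a.jump j| / amin := by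
                  gcongr <;> linarith
                linarith
        · have hnum : (c.limR j) ^ 2 ≤ (c.limL j) ^ 2 + |(c.limL j) ^ 2 - (c.limR j) ^ 2| := by
            have := neg_abs_le ((c.limL j) ^ 2 - (c.limR j) ^ 2)
            linarith
          have hcLpos : (0:ℝ) < (c.limL j) ^ 2 := pow_pos (lt_of_lt_of_le hcmin hcL) 2
          calc (c.limR j) ^ 2 / (c.limL j) ^ 2
              ≤ ((c.limL j) ^ 2 + |(c.limL j) ^ 2 - (c.limR j) ^ 2|) / (c.limL j) ^ 2 := by
                gcongr <;> linarith
            _ ≤ 1 + (|a.jump j| / amin + |(c.limL j) ^ 2 - (c.limR j) ^ 2| / cmin ^ 2) := by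
                rw [add_div, div_self (ne_of_gt hcLpos)]
                have : |(c.limL j) ^ 2 - (c.limR j) ^ 2| / (c.limL j) ^ 2
                    ≤ |(c.limL j) ^ 2 - (c.limR j) ^ 2| / cmin ^ 2 := by
                  gcongr <;> linarith
                linarith
      -- combine
      have heα : PW1.alphaJ ta j ≤ Real.exp ((|a.jump j| + 2 * Va j) / amin) := by
        have := Real.add_one_le_exp ((|a.jump j| + 2 * Va j) / amin)
        linarith
      have heσ : PW1.sigmaJ tc j
          ≤ Real.exp ((|(c.limL j) ^ 2 - (c.limR j) ^ 2| + 2 * Wc j) / cmin ^ 2) := by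
        have := Real.add_one_le_exp ((|(c.limL j) ^ 2 - (c.limR j) ^ 2| + 2 * Wc j) / cmin ^ 2)
        linarith
      have heγ : PW1.gammaJ a c j
          ≤ Real.exp (|a.jump j| / amin + |(c.limL j) ^ 2 - (c.limR j) ^ 2| / cmin ^ 2) := by
        have := Real.add_one_le_exp (|a.jump j| / amin + |(c.limL j) ^ 2 - (c.limR j) ^ 2| / cmin ^ 2)
        linarith
      calc PW1.alphaJ ta j * PW1.sigmaJ tc j * PW1.gammaJ a c j
          ≤ Real.exp ((|a.jump j| + 2 * Va j) / amin)
            * Real.exp ((|(c.limL j) ^ 2 - (c.limR j) ^ 2| + 2 * Wc j) / cmin ^ 2)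
            * Real.exp (|a.jump j| / amin + |(c.limL j) ^ 2 - (c.limR j) ^ 2| / cmin ^ 2) := by
            apply mul_le_mul _ heγ (by linarith) (by positivity)
            exact mul_le_mul heα heσ h0sigma (Real.exp_pos _).le
        _ = Real.exp ((|a.jump j| + 2 * Va j) / amin
              + (|(c.limL j) ^ 2 - (c.limR j) ^ 2| + 2 * Wc j) / cmin ^ 2
              + (|a.jump j| / amin + |(c.limL j) ^ 2 - (c.limR j) ^ 2| / cmin ^ 2)) := by
            rw [← Real.exp_add, ← Real.exp_add]
        _ ≤ Real.exp (d j) := by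
            apply Real.exp_le_exp.mpr
            apply le_of_eq
            simp only [hddef]
            field_simp
            ring
  -- Ival bounds
  have hIval : ∀ j, 1 ≤ j → j ≤ N →
      0 ≤ PW1.Ival ta tc j ∧ PW1.Ival ta tc j ≤ (z j - z (j-1)) / m := by
    intro j h1 h2
    have := hJ j h1 h2 (z j) ⟨hzle _ _ (by omega) h2, le_refl _⟩
    simpa [PW1.Ival] using this
  -- S : partial sums of d
  set S : ℕ → ℝ := fun k => ∑ i ∈ Finset.Icc 1 k, d i with hSdef
  have hS0 : ∀ k, k ≤ N → 0 ≤ S k := by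
    intro k hk
    apply Finset.sum_nonneg
    intro i hi
    rw [Finset.mem_Icc] at hi
    exact hd0 i hi.1 (by omega)
  -- bound on Aseq
  have hA : ∀ j, 1 ≤ j → j ≤ N →
      0 ≤ PW1.Aseq ta tc a c j ∧
      PW1.Aseq ta tc a c j ≤ Real.exp (S (j-1)) * ((z (j-1) - z 0) / m) := by
    intro j
    induction j with
    | zero => intro h; exact absurd h (by norm_num)
    | succ n ih =>
      intro _ hn1
      simp only [Nat.add_sub_cancel]
      cases n with
      | zero =>
        have h0 : PW1.Aseq ta tc a c 1 = 0 := rfl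
        rw [h0]
        norm_num
      | succ p =>
        have hp1 : 1 ≤ p + 1 := by omega
        have hpN : p + 1 ≤ N := by omega
        obtain ⟨ih0, ih1⟩ := ih (by omega) (by omega)
        simp only [Nat.add_sub_cancel] at ih1
        obtain ⟨hmu1, hmu2⟩ := hmu (p+1) hp1 (by omega)
        obtain ⟨hI0, hI1⟩ := hIval (p+1) hp1 hpN
        simp only [Nat.add_sub_cancel] at hI1
        rw [PW1.Aseq_succ' ta tc a c (p+1) hp1]
        have hterm0 : 0 ≤ PW1.Ival ta tc (p+1) + PW1.Aseq ta tc a c (p+1) := add_nonneg hI0 ih0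
        constructor
        · exact mul_nonneg (by linarith) hterm0
        · have hexp1 : (1:ℝ) ≤ Real.exp (S p) := by
            rw [← Real.exp_zero]
            exact Real.exp_le_exp.mpr (hS0 p (by omega))
          have hlen0 : (0:ℝ) ≤ (z (p+1) - z p) / m :=
            div_nonneg (by linarith [hzle p (p+1) (by omega) hpN]) hm.le
          have hsum : PW1.Ival ta tc (p+1) + PW1.Aseq ta tc a c (p+1)
              ≤ Real.exp (S p) * ((z (p+1) - z 0) / m) := by
            have h1' : PW1.Ival ta tc (p+1) ≤ Real.exp (S p) * ((z (p+1) - z p) / m) :=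
              le_trans hI1 (le_mul_of_one_le_left hlen0 hexp1)
            have hre : Real.exp (S p) * ((z (p+1) - z p) / m)
                + Real.exp (S p) * ((z p - z 0) / m)
                = Real.exp (S p) * ((z (p+1) - z 0) / m) := by ring
            linarith
          have hstep : S (p+1) = S p + d (p+1) := by
            simp only [hSdef]
            exact Finset.sum_Icc_succ_top (by omega) d
          calc PW1.alphaJ ta (p+1) * PW1.sigmaJ tc (p+1) * PW1.gammaJ a c (p+1)
              * (PW1.Ival ta tc (p+1) + PW1.Aseq ta tc a c (p+1))
              ≤ Real.exp (d (p+1)) * (PW1.Ival ta tc (p+1) + PW1.Aseq ta tc a c (p+1)) :=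
                mul_le_mul_of_nonneg_right hmu2 hterm0
            _ ≤ Real.exp (d (p+1)) * (Real.exp (S p) * ((z (p+1) - z 0) / m)) :=
                mul_le_mul_of_nonneg_left hsum (Real.exp_pos _).le
            _ = Real.exp (S p + d (p+1)) * ((z (p+1) - z 0) / m) := by
                have hee : Real.exp (S p + d (p+1))
                    = Real.exp (S p) * Real.exp (d (p+1)) := Real.exp_add _ _
                rw [hee]
                ring
            _ = Real.exp (S (p+1)) * ((z (p+1) - z 0) / m) := by rw [hstep]
  -- bound on S by the variations
  have hVarA : ∀ k, k ≤ N - 1 → S k ≤ 2 / amin * a.var + 2 / cmin ^ 2 * c.varSq := by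
    intro k hk
    have hsub : S k ≤ S (N-1) := by
      simp only [hSdef]
      apply Finset.sum_le_sum_of_subset_of_nonneg (Finset.Icc_subset_Icc le_rfl hk)
      intro i hi _
      rw [Finset.mem_Icc] at hi
      exact hd0 i hi.1 (by omega)
    have hfull : S (N-1) ≤ 2 / amin * a.var + 2 / cmin ^ 2 * c.varSq := by
      have hA' : ∑ i ∈ Finset.Icc 1 (N-1), (|a.jump i| + Va i) ≤ a.var := by
        simp only [PW1.var]
        rw [Finset.sum_add_distrib]
        have hmono : ∑ i ∈ Finset.Icc 1 (N-1), Va i ≤ ∑ i ∈ Finset.Icc 1 N, Va i := by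
          apply Finset.sum_le_sum_of_subset_of_nonneg (Finset.Icc_subset_Icc le_rfl (by omega))
          intro i hi _
          rw [Finset.mem_Icc] at hi
          exact hVa0 i hi.1 hi.2
        simp only [hVadef] at hmono ⊢
        linarith
      have hC' : ∑ i ∈ Finset.Icc 1 (N-1),
          (|(c.limL i) ^ 2 - (c.limR i) ^ 2| + Wc i) ≤ c.varSq := by
        simp only [PW1.varSq]
        rw [Finset.sum_add_distrib]
        have hmono : ∑ i ∈ Finset.Icc 1 (N-1), Wc i ≤ ∑ i ∈ Finset.Icc 1 N, Wc i := by
          apply Finset.sum_le_sum_of_subset_of_nonneg (Finset.Icc_subset_Icc le_rfl (by omega))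
          intro i hi _
          rw [Finset.mem_Icc] at hi
          exact hWc0 i hi.1 hi.2
        simp only [hWcdef] at hmono ⊢
        linarith
      have hSsplit : S (N-1) = 2 / amin * (∑ i ∈ Finset.Icc 1 (N-1), (|a.jump i| + Va i))
          + 2 / cmin ^ 2 * (∑ i ∈ Finset.Icc 1 (N-1),
              (|(c.limL i) ^ 2 - (c.limR i) ^ 2| + Wc i)) := by
        simp only [hSdef, hddef]
        rw [Finset.sum_add_distrib, Finset.mul_sum, Finset.mul_sum]
      rw [hSsplit]
      have e1 : (0:ℝ) ≤ 2 / amin := by positivity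
      have e2 : (0:ℝ) ≤ 2 / cmin ^ 2 := by positivity
      have := mul_le_mul_of_nonneg_left hA' e1
      have := mul_le_mul_of_nonneg_left hC' e2
      linarith
    linarith
  -- final assembly
  intro j hj1 hjN x hx
  obtain ⟨hJ0, hJ1⟩ := hJ j hj1 hjN x hx
  obtain ⟨hA0, hA1⟩ := hA j hj1 hjN
  obtain ⟨hP1, hP2⟩ := hdenom j hj1 hjN x hx
  have hterm0 : 0 ≤ (∫ s in (z (j-1))..x, 1 / (ta.piece j s * (tc.piece j s) ^ 2))
      + PW1.Aseq ta tc a c j := add_nonneg hJ0 hA0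
  have hMnn : (0:ℝ) ≤ amax * cmax ^ 2 := by nlinarith
  constructor
  · simp only [PW1.qpiece]
    exact mul_nonneg (by linarith) hterm0
  · have hSle := hVarA (j-1) (by omega)
    have hexp1 : (1:ℝ) ≤ Real.exp (S (j-1)) := by
      rw [← Real.exp_zero]
      exact Real.exp_le_exp.mpr (hS0 (j-1) (by omega))
    have hxz0 : z 0 ≤ z (j-1) := hzle 0 (j-1) (by omega) (by omega)
    have hx0 : 0 ≤ x - z 0 := by linarith [hx.1]
    have hsum : (∫ s in (z (j-1))..x, 1 / (ta.piece j s * (tc.piece j s) ^ 2))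
        + PW1.Aseq ta tc a c j ≤ Real.exp (S (j-1)) * ((x - z 0) / m) := by
      have hlen0 : (0:ℝ) ≤ (x - z (j-1)) / m := div_nonneg (by linarith [hx.1]) hm.le
      have h1' : (∫ s in (z (j-1))..x, 1 / (ta.piece j s * (tc.piece j s) ^ 2))
          ≤ Real.exp (S (j-1)) * ((x - z (j-1)) / m) :=
        le_trans hJ1 (le_mul_of_one_le_left hlen0 hexp1)
      have hre : Real.exp (S (j-1)) * ((x - z (j-1)) / m)
          + Real.exp (S (j-1)) * ((z (j-1) - z 0) / m)
          = Real.exp (S (j-1)) * ((x - z 0) / m) := by ring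
      linarith
    have hx2L : x - z 0 ≤ 2 * L := by
      have hxN : x ≤ z N := le_trans hx.2 (hzle j N hjN le_rfl)
      rw [hzN] at hxN
      rw [hz0]
      linarith
    have hEfull : Real.exp (S (j-1))
        ≤ Real.exp (2 / amin * a.var + 2 / cmin ^ 2 * c.varSq) := Real.exp_le_exp.mpr hSle
    have step1 : PW1.qpiece ta tc a c j x
        ≤ (amax * cmax ^ 2) * (Real.exp (S (j-1)) * ((x - z 0) / m)) := by
      simp only [PW1.qpiece]
      exact mul_le_mul hP2 hsum hterm0 hMnn
    have step2 : (amax * cmax ^ 2) * (Real.exp (S (j-1)) * ((x - z 0) / m))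
        ≤ (amax * cmax ^ 2) * (Real.exp (2 / amin * a.var + 2 / cmin ^ 2 * c.varSq)
            * ((2 * L) / m)) := by
      apply mul_le_mul_of_nonneg_left _ hMnn
      apply mul_le_mul hEfull (by gcongr) (div_nonneg hx0 hm.le) (Real.exp_pos _).le
    have heq : (amax * cmax ^ 2) * (Real.exp (2 / amin * a.var + 2 / cmin ^ 2 * c.varSq)
            * ((2 * L) / m))
        = 2 * L * (amax * cmax ^ 2 / (amin * cmin ^ 2))
          * Real.exp (2 / amin * a.var + 2 / cmin ^ 2 * c.varSq) := by
      rw [hmdef]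
      ring
    linarith
end

section
/- Let u be a strong solution of the 1D heterogeneous Helmholtz problem. Then the boundary (impedance) terms satisfy ω · Σ_{x∈Γ_N} (√(a(x))/c(x)) |u(x)|² ≤ | ∫_{-L}^{L} f(x) conj(u(x)) dx | + | Σ_{x∈Γ_N} g_x conj(u(x)) |, where at boundary points a(x), c(x) are understood via one-sided limits. -/
open MeasureTheory

/-- Fubini-based integration by parts core: `h` strongly measurable. -/
lemma my_parts_sm (p q : ℝ) (hpq : p ≤ q) (h ψ : ℝ → ℂ)
    (hsm : StronglyMeasurable h)
    (hh : IntegrableOn h (Set.Ioc p q))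
    (hψ : Continuous ψ) :
    ∫ s in p..q, (∫ t in p..s, h t) * ψ s = ∫ t in p..q, h t * (∫ s in t..q, ψ s) := by
  set μ := volume.restrict (Set.Ioc p q) with hμ
  have hEmeas : MeasurableSet {zz : ℝ × ℝ | zz.2 ≤ zz.1} :=
    (isClosed_le continuous_snd continuous_fst).measurableSet
  set G : ℝ × ℝ → ℂ := {zz : ℝ × ℝ | zz.2 ≤ zz.1}.indicator (fun zz => h zz.2 * ψ zz.1) with hG
  have hψint : Integrable ψ μ := hψ.integrableOn_Ioc
  have hGint : Integrable G (μ.prod μ) := by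
    have hdom : Integrable (fun zz : ℝ × ℝ => ψ zz.1 * h zz.2) (μ.prod μ) :=
      Integrable.mul_prod hψint hh
    refine Integrable.mono' hdom.norm ?_ ?_
    · exact (((hsm.comp_measurable measurable_snd).mul
        (hψ.stronglyMeasurable.comp_measurable measurable_fst)).indicator hEmeas).aestronglyMeasurable
    · refine Filter.Eventually.of_forall fun zz => ?_
      rw [hG]
      by_cases hz : zz ∈ {zz : ℝ × ℝ | zz.2 ≤ zz.1}
      · rw [Set.indicator_of_mem hz]
        simp [norm_mul, mul_comm]
      · rw [Set.indicator_of_notMem hz]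
        simp [norm_nonneg, mul_nonneg]
  have swap := MeasureTheory.integral_integral_swap (f := fun s t => G (s, t)) (μ := μ) (ν := μ)
    (by exact hGint)
  -- LHS computation
  have hL : ∫ s in p..q, (∫ t in p..s, h t) * ψ s = ∫ s, (∫ t, G (s, t) ∂μ) ∂μ := by
    rw [intervalIntegral.integral_of_le hpq]
    refine setIntegral_congr_fun measurableSet_Ioc fun s hs => ?_
    have : ∀ t, G (s, t) = Set.indicator (Set.Iic s) (fun t => h t * ψ s) t := by
      intro t
      rw [hG]
      by_cases ht : t ≤ s
      · rw [Set.indicator_of_mem (by exact ht), Set.indicator_of_mem (by exact ht)]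
      · rw [Set.indicator_of_notMem (by exact ht), Set.indicator_of_notMem (by exact ht)]
    simp_rw [this]
    rw [integral_indicator measurableSet_Iic, hμ, Measure.restrict_restrict measurableSet_Iic]
    have hset : Set.Iic s ∩ Set.Ioc p q = Set.Ioc p s := by
      ext x
      simp only [Set.mem_inter_iff, Set.mem_Iic, Set.mem_Ioc]
      constructor
      · rintro ⟨h1, h2, h3⟩; exact ⟨h2, h1⟩
      · rintro ⟨h1, h2⟩; exact ⟨h2, h1, h2.trans hs.2⟩
    rw [hset, intervalIntegral.integral_of_le hs.1.le, integral_mul_const]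
  -- RHS computation
  have hR : ∫ t in p..q, h t * (∫ s in t..q, ψ s) = ∫ t, (∫ s, G (s, t) ∂μ) ∂μ := by
    rw [intervalIntegral.integral_of_le hpq]
    refine setIntegral_congr_fun measurableSet_Ioc fun t ht => ?_
    have : ∀ s, G (s, t) = Set.indicator (Set.Ici t) (fun s => h t * ψ s) s := by
      intro s
      rw [hG]
      by_cases hst : t ≤ s
      · rw [Set.indicator_of_mem (by exact hst), Set.indicator_of_mem (by exact hst)]
      · rw [Set.indicator_of_notMem (by exact hst), Set.indicator_of_notMem (by exact hst)]
    simp_rw [this]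
    rw [integral_indicator measurableSet_Ici, hμ, Measure.restrict_restrict measurableSet_Ici]
    have hset : Set.Ici t ∩ Set.Ioc p q = Set.Icc t q := by
      ext x
      simp only [Set.mem_inter_iff, Set.mem_Ici, Set.mem_Ioc, Set.mem_Icc]
      constructor
      · rintro ⟨h1, _, h3⟩; exact ⟨h1, h3⟩
      · rintro ⟨h1, h2⟩; exact ⟨h1, ht.1.trans_le h1, h2⟩
    rw [hset, integral_Icc_eq_integral_Ioc, ← intervalIntegral.integral_of_le ht.2,
      intervalIntegral.integral_const_mul]
  rw [hL, hR, swap]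

lemma my_parts (p q : ℝ) (hpq : p ≤ q) (h ψ : ℝ → ℂ)
    (hh : IntegrableOn h (Set.Ioc p q)) (hψ : Continuous ψ) :
    ∫ s in p..q, (∫ t in p..s, h t) * ψ s = ∫ t in p..q, h t * (∫ s in t..q, ψ s) := by
  set h' := hh.1.mk h with hh'
  have hsm : StronglyMeasurable h' := hh.1.stronglyMeasurable_mk
  have hae : h =ᵐ[volume.restrict (Set.Ioc p q)] h' := hh.1.ae_eq_mk
  have haevol : ∀ᵐ x ∂volume, x ∈ Set.Ioc p q → h x = h' x :=
    (ae_restrict_iff' measurableSet_Ioc).mp hae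
  have hinner : ∀ s ∈ Set.Icc p q, (∫ t in p..s, h t) = ∫ t in p..s, h' t := by
    intro s hs
    refine intervalIntegral.integral_congr_ae ?_
    filter_upwards [haevol] with x hx hx2
    refine hx ?_
    rw [Set.uIoc_of_le hs.1] at hx2
    exact Set.Ioc_subset_Ioc_right hs.2 hx2
  have h1 : ∫ s in p..q, (∫ t in p..s, h t) * ψ s = ∫ s in p..q, (∫ t in p..s, h' t) * ψ s := by
    refine intervalIntegral.integral_congr fun s hs => ?_
    rw [Set.uIcc_of_le hpq] at hs
    rw [hinner s hs]
  have h2 : ∫ t in p..q, h t * (∫ s in t..q, ψ s) = ∫ t in p..q, h' t * (∫ s in t..q, ψ s) := by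
    refine intervalIntegral.integral_congr_ae ?_
    filter_upwards [haevol] with x hx hx2
    rw [Set.uIoc_of_le hpq] at hx2
    rw [hx hx2]
  rw [h1, h2]
  exact my_parts_sm p q hpq h' ψ hsm (hh.congr hae) hψ

lemma my_im_integral {X : Type*} [MeasurableSpace X] (μ : MeasureTheory.Measure X)
    (F : X → ℂ) (hF : Integrable F μ) :
    (∫ x, F x ∂μ).im = ∫ x, (F x).im ∂μ := by
  rw [← Complex.imCLM_apply, ← ContinuousLinearMap.integral_comp_comm Complex.imCLM hF]
  simp

lemma my_piece (p q : ℝ) (hpq : p < q) (u du w h : ℝ → ℂ) (ap : ℝ → ℝ)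
    (hu : ContinuousOn u (Set.Icc p q))
    (hdu : ∀ x ∈ Set.Ioo p q, HasDerivAt u (du x) x)
    (hw : ContinuousOn w (Set.Icc p q))
    (hwdef : ∀ x ∈ Set.Ioo p q, w x = (ap x : ℂ) * du x)
    (hap : ContinuousOn ap (Set.Icc p q)) (hap0 : ∀ x ∈ Set.Icc p q, 0 < ap x)
    (hh : IntegrableOn h (Set.Ioc p q))
    (hwode : ∀ s ∈ Set.Icc p q, w s = w p - ∫ t in p..s, h t) :
    (w q * (starRingEnd ℂ) (u q)).im - (w p * (starRingEnd ℂ) (u p)).im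
      = - ∫ t in p..q, (h t * (starRingEnd ℂ) (u t)).im := by
  set uc : ℝ → ℂ := fun x => (starRingEnd ℂ) (u x) with huc
  have hucc : ContinuousOn uc (Set.Icc p q) := continuous_star.comp_continuousOn hu
  -- the extended conjugate derivative
  set dv : ℝ → ℂ := fun s => w s / (ap s : ℂ) with hdv
  have hapc : ContinuousOn (fun s => ((ap s : ℂ))) (Set.Icc p q) :=
    Complex.continuous_ofReal.comp_continuousOn hap
  have hap0' : ∀ x ∈ Set.Icc p q, ((ap x : ℂ)) ≠ 0 := by
    intro x hx
    exact_mod_cast (hap0 x hx).ne'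
  have hdvc : ContinuousOn dv (Set.Icc p q) := hw.div hapc hap0'
  set dext : ℝ → ℂ := Set.IccExtend hpq.le ((Set.Icc p q).restrict dv) with hdext
  have hdextc : Continuous dext :=
    Continuous.Icc_extend' (continuousOn_iff_continuous_restrict.mp hdvc)
  have hdext_eq : ∀ x ∈ Set.Icc p q, dext x = dv x := by
    intro x hx
    rw [hdext, Set.IccExtend_of_mem hpq.le _ hx]
    rfl
  set ψ : ℝ → ℂ := fun x => (starRingEnd ℂ) (dext x) with hψdef
  have hψc : Continuous ψ := continuous_star.comp hdextc
  have hdu_eq : ∀ x ∈ Set.Ioo p q, du x = dv x := by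
    intro x hx
    have hx' : x ∈ Set.Icc p q := Set.Ioo_subset_Icc_self hx
    show du x = w x / (ap x : ℂ)
    rw [hwdef x hx, mul_comm, mul_div_assoc, div_self (hap0' x hx'), mul_one]
  have hψ_eq : ∀ x ∈ Set.Ioo p q, ψ x = (starRingEnd ℂ) (du x) := by
    intro x hx
    show (starRingEnd ℂ) (dext x) = (starRingEnd ℂ) (du x)
    rw [hdext_eq x (Set.Ioo_subset_Icc_self hx), ← hdu_eq x hx]
  -- FTC for the conjugate of u
  have hFTC : ∀ t ∈ Set.Icc p q, ∫ s in t..q, ψ s = uc q - uc t := by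
    intro t ht
    refine intervalIntegral.integral_eq_sub_of_hasDeriv_right_of_le ht.2
      (hucc.mono (Set.Icc_subset_Icc ht.1 le_rfl)) ?_ (hψc.intervalIntegrable _ _)
    intro x hx
    have hx' : x ∈ Set.Ioo p q := ⟨lt_of_le_of_lt ht.1 hx.1, hx.2⟩
    have : HasDerivAt uc ((starRingEnd ℂ) (du x)) x := by
      simpa [huc] using (hdu x hx').star
    rw [hψ_eq x hx']
    exact this.hasDerivWithinAt
  -- primitive of h
  set V : ℝ → ℂ := fun s => ∫ t in p..s, h t with hV
  have hhIcc : IntegrableOn h (Set.Icc p q) := by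
    rw [IntegrableOn, ← Measure.restrict_congr_set Ioc_ae_eq_Icc]
    exact hh
  have hVc : ContinuousOn V (Set.Icc p q) := by
    have := intervalIntegral.continuousOn_primitive_interval (a := p) (b := q) (μ := volume) (f := h)
      (by rwa [Set.uIcc_of_le hpq.le])
    rwa [Set.uIcc_of_le hpq.le] at this
  -- integrability facts
  have hwψ : IntervalIntegrable (fun s => w s * ψ s) volume p q := by
    apply ContinuousOn.intervalIntegrable
    rw [Set.uIcc_of_le hpq.le]
    exact hw.mul hψc.continuousOn
  have hVψ : IntervalIntegrable (fun s => V s * ψ s) volume p q := by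
    apply ContinuousOn.intervalIntegrable
    rw [Set.uIcc_of_le hpq.le]
    exact hVc.mul hψc.continuousOn
  have hhint : IntervalIntegrable h volume p q :=
    (intervalIntegrable_iff_integrableOn_Ioc_of_le hpq.le).mpr hh
  obtain ⟨C, hC⟩ : ∃ C, ∀ x ∈ Set.Icc p q, ‖u x‖ ≤ C :=
    isCompact_Icc.exists_bound_of_continuousOn hu
  have hucaesm : AEStronglyMeasurable uc (volume.restrict (Set.Ioc p q)) :=
    (hucc.mono Set.Ioc_subset_Icc_self).aestronglyMeasurable measurableSet_Ioc
  have hhU : IntegrableOn (fun t => h t * uc t) (Set.Ioc p q) := by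
    refine Integrable.mono' (hh.norm.mul_const C) (hh.1.mul hucaesm) ?_
    rw [ae_restrict_iff' measurableSet_Ioc]
    refine Filter.Eventually.of_forall fun x hx => ?_
    have : ‖uc x‖ = ‖u x‖ := norm_star _
    rw [norm_mul, this]
    exact mul_le_mul_of_nonneg_left (hC x (Set.Ioc_subset_Icc_self hx)) (norm_nonneg _)
  have hhUiv : IntervalIntegrable (fun t => h t * uc t) volume p q :=
    (intervalIntegrable_iff_integrableOn_Ioc_of_le hpq.le).mpr hhU
  -- step 1
  have step1 : ∫ s in p..q, w s * ψ s
      = w p * (uc q - uc p) - ∫ s in p..q, V s * ψ s := by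
    have e1 : ∫ s in p..q, w s * ψ s = ∫ s in p..q, (w p * ψ s - V s * ψ s) := by
      refine intervalIntegral.integral_congr fun s hs => ?_
      rw [Set.uIcc_of_le hpq.le] at hs
      rw [hwode s hs]; ring
    rw [e1, intervalIntegral.integral_sub ((hψc.intervalIntegrable p q).const_mul _) hVψ,
      intervalIntegral.integral_const_mul, hFTC p (Set.left_mem_Icc.mpr hpq.le)]
  -- step 2
  have step2 : ∫ s in p..q, V s * ψ s = V q * uc q - ∫ t in p..q, h t * uc t := by
    rw [hV]
    rw [my_parts p q hpq.le h ψ hh hψc]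
    have e2 : ∫ t in p..q, h t * ∫ s in t..q, ψ s = ∫ t in p..q, (h t * uc q - h t * uc t) := by
      refine intervalIntegral.integral_congr fun t ht => ?_
      rw [Set.uIcc_of_le hpq.le] at ht
      rw [hFTC t ht]; ring
    rw [e2, intervalIntegral.integral_sub (hhint.mul_const _) hhUiv,
      intervalIntegral.integral_mul_const]
  -- step 3 : the w ψ integral is real
  have step3 : (∫ s in p..q, w s * ψ s).im = 0 := by
    rw [intervalIntegral.integral_of_le hpq.le,
      my_im_integral _ _ ((intervalIntegrable_iff_integrableOn_Ioc_of_le hpq.le).mp hwψ)]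
    refine integral_eq_zero_of_ae ?_
    rw [← Measure.restrict_congr_set Ioo_ae_eq_Ioc]
    filter_upwards [ae_restrict_mem measurableSet_Ioo] with x hx
    show (w x * ψ x).im = 0
    rw [hwdef x hx, hψ_eq x hx, mul_assoc, Complex.mul_conj]
    simp [← Complex.ofReal_mul]
  -- step 4 : im of the h uc integral
  have step4 : (∫ t in p..q, h t * uc t).im = ∫ t in p..q, (h t * uc t).im := by
    rw [intervalIntegral.integral_of_le hpq.le, intervalIntegral.integral_of_le hpq.le,
      my_im_integral _ _ hhU]
  -- assemble
  have hkey : w q * uc q - w p * uc p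
      = (∫ s in p..q, w s * ψ s) - ∫ t in p..q, h t * uc t := by
    have h1 := step1
    rw [step2] at h1
    rw [hwode q (Set.right_mem_Icc.mpr hpq.le)]
    have hVq : V q = ∫ t in p..q, h t := rfl
    rw [← hVq]
    linear_combination -h1
  calc (w q * uc q).im - (w p * uc p).im
      = (w q * uc q - w p * uc p).im := (Complex.sub_im _ _).symm
    _ = ((∫ s in p..q, w s * ψ s) - ∫ t in p..q, h t * uc t).im := by rw [hkey]
    _ = (∫ s in p..q, w s * ψ s).im - (∫ t in p..q, h t * uc t).im := Complex.sub_im _ _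
    _ = - ∫ t in p..q, (h t * uc t).im := by rw [step3, step4]; ring

lemma my_im_bd (gv uv : ℂ) (r : ℝ) :
    ((gv + Complex.I * (r:ℂ) * uv) * (starRingEnd ℂ) uv).im
      = (gv * (starRingEnd ℂ) uv).im + r * ‖uv‖^2 := by
  rw [add_mul, Complex.add_im, mul_assoc, mul_assoc, Complex.mul_conj,
    ← Complex.ofReal_mul, Complex.I_mul_im, Complex.ofReal_re,
    ← Complex.sq_norm]



open MeasureTheory

/-- A strong solution of the 1D heterogeneous Helmholtz problem
`-(a u')' - (ω/c)² u = f` on `(z 0, z N)` with impedance boundary data `g` on `ΓN`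
and homogeneous Dirichlet data on `ΓD`: `u` is continuous on `[z 0, z N]`,
differentiable on each subinterval with derivative `du`, `a·u'` extends to a continuous
function `w` satisfying `w y - w x = -∫_x^y ((ω/c)² u + f)`, together with the impedance
boundary conditions on `ΓN` and `u = 0` on `ΓD`. -/
structure StrongSol {N : ℕ} {z : ℕ → ℝ} (a c : PW1 N z) (ω : ℝ)
    (ΓN ΓD : Finset ℝ) (f g : ℝ → ℂ) where
  u : ℝ → ℂ
  du : ℝ → ℂ
  w : ℝ → ℂ
  contu : ContinuousOn u (Set.Icc (z 0) (z N))
  hasDeriv : ∀ j, 1 ≤ j → j ≤ N → ∀ x ∈ Set.Ioo (z (j-1)) (z j), HasDerivAt u (du x) x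
  wdef : ∀ j, 1 ≤ j → j ≤ N → ∀ x ∈ Set.Ioo (z (j-1)) (z j), w x = (a.piece j x : ℂ) * du x
  contw : ContinuousOn w (Set.Icc (z 0) (z N))
  ode : ∀ x ∈ Set.Icc (z 0) (z N), ∀ y ∈ Set.Icc (z 0) (z N), x ≤ y →
    w y - w x = -∫ s in x..y, (((ω / c.f s : ℝ) : ℂ)^2 * u s + f s)
  bcR : z N ∈ ΓN →
    w (z N) - Complex.I * (ω : ℂ) *
      ((Real.sqrt (a.piece N (z N)) / c.piece N (z N) : ℝ) : ℂ) * u (z N) = g (z N)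
  bcL : z 0 ∈ ΓN →
    -w (z 0) - Complex.I * (ω : ℂ) *
      ((Real.sqrt (a.piece 1 (z 0)) / c.piece 1 (z 0) : ℝ) : ℂ) * u (z 0) = g (z 0)
  dir : ∀ x ∈ ΓD, u x = 0

/-- estimate `estomegacu`: a strong solution `u` of the 1D
heterogeneous Helmholtz problem satisfies
`ω ∑_{x∈Γ_N} (√a(x)/c(x)) |u(x)|² ≤ |∫ f conj(u)| + |∑_{x∈Γ_N} g_x conj(u(x))|`,
the boundary values of `a, c` being understood as one-sided limits. -/
theorem stmt13 (L : ℝ) (hL : 0 < L) (N : ℕ) (hN : 1 ≤ N) (z : ℕ → ℝ)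
    (hz0 : z 0 = -L) (hzN : z N = L) (hzmono : ∀ j < N, z j < z (j+1))
    (amin amax cmin cmax : ℝ) (hamin : 0 < amin) (hamax : amin ≤ amax)
    (hcmin : 0 < cmin) (hcmax : cmin ≤ cmax)
    (a c : PW1 N z)
    (hab : ∀ j, 1 ≤ j → j ≤ N → ∀ x ∈ Set.Icc (z (j-1)) (z j),
      amin ≤ a.piece j x ∧ a.piece j x ≤ amax)
    (hcb : ∀ j, 1 ≤ j → j ≤ N → ∀ x ∈ Set.Icc (z (j-1)) (z j),
      cmin ≤ c.piece j x ∧ c.piece j x ≤ cmax)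
    (ω ω0 : ℝ) (hω0 : 0 < ω0) (hω : ω0 ≤ ω)
    (ΓN ΓD : Finset ℝ) (hΓ : ΓN ∪ ΓD = {-L, L}) (hdisj : Disjoint ΓN ΓD)
    (hΓN : ΓN.Nonempty)
    (f g : ℝ → ℂ)
    (hf : MeasureTheory.MemLp f 2 (MeasureTheory.volume.restrict (Set.Ioo (-L) L)))
    (S : StrongSol a c ω ΓN ΓD f g) :
    ω * ∑ x ∈ ΓN, (Real.sqrt (a.bdry x) / c.bdry x) * ‖S.u x‖^2
      ≤ ‖∫ x in (z 0)..(z N), f x * (starRingEnd ℂ) (S.u x)‖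
        + ‖∑ x ∈ ΓN, g x * (starRingEnd ℂ) (S.u x)‖ := by
  classical
  have hz0N : z 0 < z N := by rw [hz0, hzN]; linarith
  have hmono : ∀ n, n ≤ N → ∀ i, i ≤ n → z i ≤ z n := by
    intro n
    induction n with
    | zero => intro _ i hi; have : i = 0 := Nat.le_zero.mp hi; rw [this]
    | succ m ih =>
      intro hn i hi
      by_cases hi' : i = m + 1
      · rw [hi']
      · have h1 : i ≤ m := by omega
        exact (ih (by omega) i h1).trans (hzmono m (by omega)).le
  have hsub : ∀ k, k < N → Set.Icc (z k) (z (k+1)) ⊆ Set.Icc (z 0) (z N) := fun k hk =>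
    Set.Icc_subset_Icc (hmono k (by omega) 0 (by omega)) (hmono N le_rfl (k+1) (by omega))
  set h : ℝ → ℂ := fun s => ((ω / c.f s : ℝ) : ℂ)^2 * S.u s + f s with hden
  haveI hfin : IsFiniteMeasure (volume.restrict (Set.Ioo (-L) L)) := by
    constructor
    rw [Measure.restrict_apply_univ, Real.volume_Ioo]
    exact ENNReal.ofReal_lt_top
  have hf1 : IntegrableOn f (Set.Ioo (-L) L) := hf.integrable (by norm_num)
  have hfIoc : IntegrableOn f (Set.Ioc (-L) L) := by
    rwa [IntegrableOn, ← Measure.restrict_congr_set Ioo_ae_eq_Ioc]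
  have hfIoc' : ∀ k, k < N → IntegrableOn f (Set.Ioc (z k) (z (k+1))) := by
    intro k hk
    refine hfIoc.mono_set (Set.Ioc_subset_Ioc ?_ ?_)
    · rw [← hz0]; exact hmono k (by omega) 0 (by omega)
    · rw [← hzN]; exact hmono N le_rfl (k+1) (by omega)
  have hcpC : ∀ j, 1 ≤ j → j ≤ N → ContinuousOn (c.piece j) (Set.Icc (z (j-1)) (z j)) :=
    fun j h1 h2 x hx => ((c.smooth j h1 h2 x hx).continuousAt).continuousWithinAt
  have hapC : ∀ j, 1 ≤ j → j ≤ N → ContinuousOn (a.piece j) (Set.Icc (z (j-1)) (z j)) :=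
    fun j h1 h2 x hx => ((a.smooth j h1 h2 x hx).continuousAt).continuousWithinAt
  have hhint : ∀ k, k < N → IntegrableOn h (Set.Ioc (z k) (z (k+1))) := by
    intro k hk
    have h1 : 1 ≤ k + 1 := by omega
    have h2 : k + 1 ≤ N := by omega
    have hc0 : ∀ x ∈ Set.Icc (z k) (z (k+1)), c.piece (k+1) x ≠ 0 := fun x hx =>
      (lt_of_lt_of_le hcmin (hcb (k+1) h1 h2 x hx).1).ne'
    have hcp : ContinuousOn (fun t => (((ω / c.piece (k+1) t : ℝ) : ℂ))^2 * S.u t)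
        (Set.Icc (z k) (z (k+1))) :=
      ((Complex.continuous_ofReal.comp_continuousOn
        (continuousOn_const.div (hcpC (k+1) h1 h2) hc0)).pow 2).mul (S.contu.mono (hsub k hk))
    have hφint : IntegrableOn (fun t => (((ω / c.piece (k+1) t : ℝ) : ℂ))^2 * S.u t + f t)
        (Set.Ioc (z k) (z (k+1))) :=
      ((hcp.integrableOn_Icc).mono_set Set.Ioc_subset_Icc_self).add (hfIoc' k hk)
    refine hφint.congr ?_
    rw [← Measure.restrict_congr_set Ioo_ae_eq_Ioc]
    filter_upwards [ae_restrict_mem measurableSet_Ioo] with x hx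
    show (((ω / c.piece (k+1) x : ℝ) : ℂ))^2 * S.u x + f x
      = (((ω / c.f x : ℝ) : ℂ))^2 * S.u x + f x
    rw [c.agree (k+1) h1 h2 x hx]
  obtain ⟨CU, hCU⟩ := isCompact_Icc.exists_bound_of_continuousOn S.contu
  have hmulint : ∀ (F : ℝ → ℂ) (p q : ℝ), z 0 ≤ p → q ≤ z N →
      IntegrableOn F (Set.Ioc p q) →
      IntegrableOn (fun t => F t * (starRingEnd ℂ) (S.u t)) (Set.Ioc p q) := by
    intro F p q hp hq hF
    have hsubset : Set.Ioc p q ⊆ Set.Icc (z 0) (z N) := fun x hx =>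
      ⟨hp.trans hx.1.le, hx.2.trans hq⟩
    have haesm : AEStronglyMeasurable (fun t => (starRingEnd ℂ) (S.u t))
        (volume.restrict (Set.Ioc p q)) :=
      ((continuous_star.comp_continuousOn S.contu).mono hsubset).aestronglyMeasurable
        measurableSet_Ioc
    refine Integrable.mono' (hF.norm.mul_const CU) (hF.1.mul haesm) ?_
    rw [ae_restrict_iff' measurableSet_Ioc]
    refine Filter.Eventually.of_forall fun x hx => ?_
    have hns : ‖(starRingEnd ℂ) (S.u x)‖ = ‖S.u x‖ := norm_star _
    rw [norm_mul, hns]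
    exact mul_le_mul_of_nonneg_left (hCU x (hsubset hx)) (norm_nonneg _)
  have hwode : ∀ k, k < N → ∀ s ∈ Set.Icc (z k) (z (k+1)),
      S.w s = S.w (z k) - ∫ t in (z k)..s, h t := by
    intro k hk s hs
    have hk0 : z 0 ≤ z k := hmono k (by omega) 0 (by omega)
    have hkN : z (k+1) ≤ z N := hmono N le_rfl (k+1) (by omega)
    have hmem1 : z k ∈ Set.Icc (z 0) (z N) := ⟨hk0, (hzmono k hk).le.trans hkN⟩
    have hmem2 : s ∈ Set.Icc (z 0) (z N) := ⟨hk0.trans hs.1, hs.2.trans hkN⟩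
    have hode := S.ode (z k) hmem1 s hmem2 hs.1
    show S.w s = S.w (z k) - ∫ t in (z k)..s, (((ω / c.f t : ℝ) : ℂ)^2 * S.u t + f t)
    linear_combination hode
  have pieceId : ∀ k, k < N →
      (S.w (z (k+1)) * (starRingEnd ℂ) (S.u (z (k+1)))).im
        - (S.w (z k) * (starRingEnd ℂ) (S.u (z k))).im
      = - ∫ t in (z k)..(z (k+1)), (h t * (starRingEnd ℂ) (S.u t)).im := by
    intro k hk
    have h1 : 1 ≤ k + 1 := by omega
    have h2 : k + 1 ≤ N := by omega
    exact my_piece (z k) (z (k+1)) (hzmono k hk) S.u S.du S.w h (a.piece (k+1))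
      (S.contu.mono (hsub k hk)) (fun x hx => S.hasDeriv (k+1) h1 h2 x hx)
      (S.contw.mono (hsub k hk)) (fun x hx => S.wdef (k+1) h1 h2 x hx)
      (hapC (k+1) h1 h2) (fun x hx => lt_of_lt_of_le hamin (hab (k+1) h1 h2 x hx).1)
      (hhint k hk) (hwode k hk)
  have himeq : ∀ t, (h t * (starRingEnd ℂ) (S.u t)).im
      = (f t * (starRingEnd ℂ) (S.u t)).im := by
    intro t
    show ((((ω / c.f t : ℝ) : ℂ)^2 * S.u t + f t) * (starRingEnd ℂ) (S.u t)).im = _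
    rw [add_mul, Complex.add_im, mul_assoc, Complex.mul_conj, ← Complex.ofReal_pow,
      ← Complex.ofReal_mul, Complex.ofReal_im, zero_add]
  have hfick : ∀ k, k < N → IntervalIntegrable
      (fun t => (f t * (starRingEnd ℂ) (S.u t)).im) volume (z k) (z (k+1)) := by
    intro k hk
    refine (intervalIntegrable_iff_integrableOn_Ioc_of_le (hzmono k hk).le).mpr ?_
    exact Complex.imCLM.integrable_comp (hmulint f (z k) (z (k+1))
      (hmono k (by omega) 0 (by omega)) (hmono N le_rfl (k+1) (by omega)) (hfIoc' k hk))
  have hfU : IntegrableOn (fun t => f t * (starRingEnd ℂ) (S.u t)) (Set.Ioc (z 0) (z N)) :=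
    hmulint f (z 0) (z N) le_rfl le_rfl (by rw [hz0, hzN]; exact hfIoc)
  have himA : (∫ x in (z 0)..(z N), f x * (starRingEnd ℂ) (S.u x)).im
      = ∫ x in (z 0)..(z N), (f x * (starRingEnd ℂ) (S.u x)).im := by
    rw [intervalIntegral.integral_of_le hz0N.le, intervalIntegral.integral_of_le hz0N.le]
    exact my_im_integral _ _ hfU
  have hMain : (S.w (z N) * (starRingEnd ℂ) (S.u (z N))).im
      - (S.w (z 0) * (starRingEnd ℂ) (S.u (z 0))).im
      = -(∫ x in (z 0)..(z N), f x * (starRingEnd ℂ) (S.u x)).im := by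
    have tele := Finset.sum_range_sub
      (fun j => (S.w (z j) * (starRingEnd ℂ) (S.u (z j))).im) N
    rw [← tele]
    have e : ∀ k ∈ Finset.range N,
        (S.w (z (k+1)) * (starRingEnd ℂ) (S.u (z (k+1)))).im
          - (S.w (z k) * (starRingEnd ℂ) (S.u (z k))).im
        = - ∫ t in (z k)..(z (k+1)), (f t * (starRingEnd ℂ) (S.u t)).im := by
      intro k hk
      rw [pieceId k (Finset.mem_range.mp hk)]
      congr 1
      refine intervalIntegral.integral_congr fun t _ => himeq t
    calc ∑ k ∈ Finset.range N,
          ((S.w (z (k+1)) * (starRingEnd ℂ) (S.u (z (k+1)))).im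
            - (S.w (z k) * (starRingEnd ℂ) (S.u (z k))).im)
        = ∑ k ∈ Finset.range N,
            (- ∫ t in (z k)..(z (k+1)), (f t * (starRingEnd ℂ) (S.u t)).im) :=
          Finset.sum_congr rfl e
      _ = - ∑ k ∈ Finset.range N,
            ∫ t in (z k)..(z (k+1)), (f t * (starRingEnd ℂ) (S.u t)).im := by
          rw [Finset.sum_neg_distrib]
      _ = - ∫ t in (z 0)..(z N), (f t * (starRingEnd ℂ) (S.u t)).im := by
          rw [intervalIntegral.sum_integral_adjacent_intervals fun k hk => hfick k hk]
      _ = -(∫ x in (z 0)..(z N), f x * (starRingEnd ℂ) (S.u x)).im := by rw [himA]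
  -- boundary values
  have hΓsub : ΓN ⊆ ({-L, L} : Finset ℝ) := by
    intro x hx; rw [← hΓ]; exact Finset.mem_union_left _ hx
  have hneLL : (-L) ≠ L := by intro hcon; linarith
  have hbdL : Real.sqrt (a.bdry (-L)) / c.bdry (-L)
      = Real.sqrt (a.piece 1 (z 0)) / c.piece 1 (z 0) := by
    rw [PW1.bdry, PW1.bdry, if_pos hz0.symm, if_pos hz0.symm]
  have hLnez0 : L ≠ z 0 := by rw [hz0]; intro hcon; linarith
  have hbdR : Real.sqrt (a.bdry L) / c.bdry L
      = Real.sqrt (a.piece N (z N)) / c.piece N (z N) := by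
    rw [PW1.bdry, PW1.bdry, if_neg hLnez0, if_neg hLnez0]
  have hΘN : (S.w (z N) * (starRingEnd ℂ) (S.u (z N))).im
      = (if L ∈ ΓN then (g L * (starRingEnd ℂ) (S.u L)).im
          + (ω * (Real.sqrt (a.bdry L) / c.bdry L)) * ‖S.u L‖^2 else 0) := by
    by_cases hm : L ∈ ΓN
    · rw [if_pos hm]
      have hm' : z N ∈ ΓN := by rwa [hzN]
      have hwN : S.w (z N) = g (z N)
          + Complex.I * ((ω * (Real.sqrt (a.piece N (z N)) / c.piece N (z N)) : ℝ) : ℂ)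
            * S.u (z N) := by
        have hbc := S.bcR hm'
        push_cast at hbc ⊢
        linear_combination hbc
      rw [hwN, my_im_bd, hbdR, hzN]
    · rw [if_neg hm]
      have hmem : z N ∈ ΓN ∪ ΓD := by
        rw [hΓ, hzN]; exact Finset.mem_insert_of_mem (Finset.mem_singleton_self L)
      have hd : z N ∈ ΓD := by
        rcases Finset.mem_union.mp hmem with h' | h'
        · exact absurd (by rwa [hzN] at h') hm
        · exact h'
      rw [S.dir _ hd]
      simp
  have hΘ0 : (S.w (z 0) * (starRingEnd ℂ) (S.u (z 0))).im
      = (if -L ∈ ΓN then -(g (-L) * (starRingEnd ℂ) (S.u (-L))).im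
          - (ω * (Real.sqrt (a.bdry (-L)) / c.bdry (-L))) * ‖S.u (-L)‖^2 else 0) := by
    by_cases hm : -L ∈ ΓN
    · rw [if_pos hm]
      have hm' : z 0 ∈ ΓN := by rwa [hz0]
      have hwL : S.w (z 0) = -g (z 0)
          + Complex.I * ((-(ω * (Real.sqrt (a.piece 1 (z 0)) / c.piece 1 (z 0))) : ℝ) : ℂ)
            * S.u (z 0) := by
        have hbc := S.bcL hm'
        push_cast at hbc ⊢
        linear_combination -hbc
      rw [hwL, my_im_bd, hbdL, hz0, neg_mul, Complex.neg_im]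
      ring
    · rw [if_neg hm]
      have hmem : z 0 ∈ ΓN ∪ ΓD := by
        rw [hΓ, hz0]; exact Finset.mem_insert_self _ _
      have hd : z 0 ∈ ΓD := by
        rcases Finset.mem_union.mp hmem with h' | h'
        · exact absurd (by rwa [hz0] at h') hm
        · exact h'
      rw [S.dir _ hd]
      simp
  rw [hΘN, hΘ0] at hMain
  have hA : -(∫ x in (z 0)..(z N), f x * (starRingEnd ℂ) (S.u x)).im
      ≤ ‖∫ x in (z 0)..(z N), f x * (starRingEnd ℂ) (S.u x)‖ := by
    exact (neg_le_abs _).trans (Complex.abs_im_le_norm _)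
  by_cases hmL : -L ∈ ΓN <;> by_cases hmR : L ∈ ΓN
  · -- both endpoints
    have hΓeq : ΓN = ({-L, L} : Finset ℝ) :=
      hΓsub.antisymm (Finset.insert_subset_iff.mpr ⟨hmL, Finset.singleton_subset_iff.mpr hmR⟩)
    rw [if_pos hmL, if_pos hmR] at hMain
    have hsumR : ∀ F : ℝ → ℝ, ∑ x ∈ ΓN, F x = F (-L) + F L := by
      intro F; rw [hΓeq]; exact Finset.sum_pair hneLL
    have hsumC : ∀ F : ℝ → ℂ, ∑ x ∈ ΓN, F x = F (-L) + F L := by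
      intro F; rw [hΓeq]; exact Finset.sum_pair hneLL
    rw [hsumR, hsumC]
    have hB : -((g (-L) * (starRingEnd ℂ) (S.u (-L))) + g L * (starRingEnd ℂ) (S.u L)).im
        ≤ ‖(g (-L) * (starRingEnd ℂ) (S.u (-L))) + g L * (starRingEnd ℂ) (S.u L)‖ := by
      exact (neg_le_abs _).trans (Complex.abs_im_le_norm _)
    rw [Complex.add_im] at hB
    nlinarith [hMain, hA, hB]
  · -- only -L
    have hΓeq : ΓN = ({-L} : Finset ℝ) := by
      refine Finset.Subset.antisymm (fun x hx => ?_) (Finset.singleton_subset_iff.mpr hmL)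
      rcases Finset.mem_insert.mp (hΓsub hx) with h' | h'
      · rw [h']; exact Finset.mem_singleton_self _
      · exact absurd ((Finset.mem_singleton.mp h') ▸ hx) hmR
    rw [if_pos hmL, if_neg hmR] at hMain
    have hsumR : ∀ F : ℝ → ℝ, ∑ x ∈ ΓN, F x = F (-L) := by
      intro F; rw [hΓeq]; exact Finset.sum_singleton _ _
    have hsumC : ∀ F : ℝ → ℂ, ∑ x ∈ ΓN, F x = F (-L) := by
      intro F; rw [hΓeq]; exact Finset.sum_singleton _ _
    rw [hsumR, hsumC]
    have hB : -(g (-L) * (starRingEnd ℂ) (S.u (-L))).im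
        ≤ ‖g (-L) * (starRingEnd ℂ) (S.u (-L))‖ := by
      exact (neg_le_abs _).trans (Complex.abs_im_le_norm _)
    nlinarith [hMain, hA, hB]
  · -- only L
    have hΓeq : ΓN = ({L} : Finset ℝ) := by
      refine Finset.Subset.antisymm (fun x hx => ?_) (Finset.singleton_subset_iff.mpr hmR)
      rcases Finset.mem_insert.mp (hΓsub hx) with h' | h'
      · exact absurd (h' ▸ hx) hmL
      · exact h'
    rw [if_neg hmL, if_pos hmR] at hMain
    have hsumR : ∀ F : ℝ → ℝ, ∑ x ∈ ΓN, F x = F L := by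
      intro F; rw [hΓeq]; exact Finset.sum_singleton _ _
    have hsumC : ∀ F : ℝ → ℂ, ∑ x ∈ ΓN, F x = F L := by
      intro F; rw [hΓeq]; exact Finset.sum_singleton _ _
    rw [hsumR, hsumC]
    have hB : -(g L * (starRingEnd ℂ) (S.u L)).im
        ≤ ‖g L * (starRingEnd ℂ) (S.u L)‖ := by
      exact (neg_le_abs _).trans (Complex.abs_im_le_norm _)
    nlinarith [hMain, hA, hB]
  · -- empty : contradiction
    exfalso
    obtain ⟨x, hx⟩ := hΓN
    rcases Finset.mem_insert.mp (hΓsub hx) with h' | h'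
    · exact hmL (h' ▸ hx)
    · exact hmR ((Finset.mem_singleton.mp h') ▸ hx)
end
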